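/- arXiv:2107.06769 — 19 statements merged into one kernel-verified Lean document; each statement's English description precedes it below -/
import Mathlib

section
/- Let R be a ring, P a prime two-sided ideal of R, and S an additive subgroup of R. Let φ: S → R and ξ: S → R be additive maps such that φ(s)·r·ξ(s) ∈ P for all s ∈ S and all r ∈ R. Then either φ(s) ∈ P for all s ∈ S, or ξ(s) ∈ P for all s ∈ S. -/
theorem stmt_0 {R : Type*} [Ring R] (P : TwoSidedIdeal R)
    (hP : P ≠ ⊤)
    (hprime : ∀ x y : R, (∀ r : R, x * r * y ∈ P) → x ∈ P ∨ y ∈ P)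
    (S : AddSubgroup R) (φ ξ : S → R)
    (hφ : ∀ s t : S, φ (s + t) = φ s + φ t)
    (hξ : ∀ s t : S, ξ (s + t) = ξ s + ξ t)
    (h : ∀ (s : S) (r : R), φ s * r * ξ s ∈ P) :
    (∀ s : S, φ s ∈ P) ∨ (∀ s : S, ξ s ∈ P) := by
  by_contra hc
  push_neg at hc
  obtain ⟨⟨s, hs⟩, ⟨t, ht⟩⟩ := hc
  have key : ∀ r : R, φ s * r * ξ t + φ t * r * ξ s ∈ P := by
    intro r
    have h1 := h (s + t) r
    rw [hφ, hξ] at h1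
    have expand : (φ s + φ t) * r * (ξ s + ξ t)
        = (φ s * r * ξ s + φ t * r * ξ t) + (φ s * r * ξ t + φ t * r * ξ s) := by
      noncomm_ring
    rw [expand] at h1
    have h2 : φ s * r * ξ s + φ t * r * ξ t ∈ P := P.add_mem (h s r) (h t r)
    have := P.sub_mem h1 h2
    simpa using this
  have key2 : ∀ r : R, φ s * r * ξ t ∈ P := by
    intro r
    have := hprime (φ s * r * ξ t) (φ s * r * ξ t) (fun u => by
      set a := φ s * r * ξ t with ha
      set b := φ t * r * ξ s with hb
      have hab : a * u * (a + b) ∈ P := P.mul_mem_left _ _ (key r)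
      have hb' : a * u * b ∈ P := by
        have := h s (r * ξ t * u * (φ t * r))
        have eq1 : φ s * (r * ξ t * u * (φ t * r)) * ξ s = a * u * b := by
          rw [ha, hb]; noncomm_ring
        rwa [eq1] at this
      have eq2 : a * u * a = a * u * (a + b) - a * u * b := by noncomm_ring
      rw [eq2]
      exact P.sub_mem hab hb')
    tauto
  rcases hprime _ _ key2 with h' | h' <;> [exact hs h'; exact ht h']
end

section
/- Let R be a ring and P a prime two-sided ideal of R. If the anticommutator x∘y = xy + yx lies in P for all x, y ∈ R, then the quotient ring R/P is a commutative integral domain. -/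
theorem stmt_2 {R : Type*} [Ring R] (P : TwoSidedIdeal R)
    (hP : P ≠ ⊤)
    (hprime : ∀ x y : R, (∀ r : R, x * r * y ∈ P) → x ∈ P ∨ y ∈ P)
    (h : ∀ x y : R, x * y + y * x ∈ P) :
    (∀ a b : P.ringCon.Quotient, a * b = b * a) ∧ IsDomain P.ringCon.Quotient := by
  have hmem : ∀ x : R, x ∈ P ↔ (x : P.ringCon.Quotient) = 0 := by
    intro x
    rw [TwoSidedIdeal.mem_iff, ← RingCon.coe_zero, RingCon.eq]
  -- anticommutativity in the quotient
  have hQ : ∀ a b : P.ringCon.Quotient, a * b + b * a = 0 := by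
    intro a b
    obtain ⟨x, rfl⟩ := Quotient.exists_rep a
    obtain ⟨y, rfl⟩ := Quotient.exists_rep b
    exact (hmem (x * y + y * x)).mp (h x y)
  have hanti : ∀ a b : P.ringCon.Quotient, a * b = -(b * a) := fun a b =>
    eq_neg_of_add_eq_zero_left (hQ a b)
  -- 2arb = 0 in the quotient
  have h2 : ∀ a r b : P.ringCon.Quotient, 2 * (a * r * b) = 0 := by
    intro a r b
    have e : a * r * b = -(a * r * b) := by
      calc a * r * b = a * (r * b) := by rw [mul_assoc]
        _ = -((r * b) * a) := hanti a (r * b)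
        _ = -(r * (b * a)) := by rw [mul_assoc]
        _ = -(r * (-(a * b))) := by rw [hanti b a]
        _ = r * (a * b) := by rw [mul_neg, neg_neg]
        _ = (r * a) * b := by rw [mul_assoc]
        _ = (-(a * r)) * b := by rw [hanti r a]
        _ = -(a * r * b) := by rw [neg_mul]
    rw [two_mul]
    exact add_eq_zero_iff_eq_neg.mpr e
  -- primeness in the quotient
  have hprime' : ∀ a b : P.ringCon.Quotient, (∀ r, a * r * b = 0) → a = 0 ∨ b = 0 := by
    intro a b hab
    obtain ⟨x, rfl⟩ := Quotient.exists_rep a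
    obtain ⟨y, rfl⟩ := Quotient.exists_rep b
    have := hprime x y fun r => (hmem _).mpr (by exact_mod_cast hab ((r : P.ringCon.Quotient)))
    exact this.imp (hmem x).mp (hmem y).mp
  have h10 : (1 : P.ringCon.Quotient) ≠ 0 := by
    intro h10
    exact hP (P.eq_top ((hmem 1).mpr h10))
  -- 2a = 0 in the quotient
  have h20 : ∀ a : P.ringCon.Quotient, 2 * a = 0 := by
    intro a
    rcases hprime' (2 * a) 1 (fun r => by
      rw [mul_one, mul_assoc]
      simpa using h2 a r 1) with h' | h'
    · exact h'
    · exact absurd h' h10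
  -- commutativity
  have hcomm : ∀ a b : P.ringCon.Quotient, a * b = b * a := by
    intro a b
    calc a * b = -(b * a) := hanti a b
      _ = -(b * a) + 2 * (b * a) := by rw [h20, add_zero]
      _ = -(b * a) + (b * a + b * a) := by rw [two_mul]
      _ = b * a := by rw [neg_add_cancel_left]
  refine ⟨hcomm, ?_⟩
  have hnt : Nontrivial P.ringCon.Quotient := ⟨1, 0, h10⟩
  have hnzd : NoZeroDivisors P.ringCon.Quotient := by
    constructor
    intro a b hab
    refine hprime' a b fun r => ?_
    calc a * r * b = r * (a * b) := by rw [hcomm a r, mul_assoc]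
      _ = 0 := by rw [hab, mul_zero]
  exact NoZeroDivisors.to_isDomain _
end

section
/- Let R be a ring, P a prime two-sided ideal of R, and F a generalized derivation of R with associated derivation d. If [x, F(x)] ∈ P for all x ∈ R, then either the quotient ring R/P is a commutative integral domain, or d(x) ∈ P for all x ∈ R. -/
theorem stmt_3 {R : Type*} [Ring R] (P : TwoSidedIdeal R)
    (hP : P ≠ ⊤)
    (hprime : ∀ x y : R, (∀ r : R, x * r * y ∈ P) → x ∈ P ∨ y ∈ P)
    (d F : R → R)
    (hd_add : ∀ x y : R, d (x + y) = d x + d y)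
    (hd_mul : ∀ x y : R, d (x * y) = d x * y + x * d y)
    (hF_add : ∀ x y : R, F (x + y) = F x + F y)
    (hF_mul : ∀ x y : R, F (x * y) = F x * y + x * d y)
    (h : ∀ x : R, x * F x - F x * x ∈ P) :
    ((∀ a b : P.ringCon.Quotient, a * b = b * a) ∧ IsDomain P.ringCon.Quotient) ∨ (∀ x : R, d x ∈ P) := by
  -- Step 1: linearization
  have h1 : ∀ x y : R, (x * F y - F y * x) + (y * F x - F x * y) ∈ P := by
    intro x y
    have h0 := h (x + y)
    rw [hF_add] at h0
    have e : (x * F y - F y * x) + (y * F x - F x * y)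
        = ((x + y) * (F x + F y) - (F x + F y) * (x + y)) - (x * F x - F x * x)
          - (y * F y - F y * y) := by noncomm_ring
    rw [e]
    exact P.sub_mem (P.sub_mem h0 (h x)) (h y)
  -- Step 2
  have h2 : ∀ x y : R, (x * y - y * x) * d x + y * (x * d x - d x * x) ∈ P := by
    intro x y
    have h0 := h1 x (y * x)
    rw [hF_mul] at h0
    have e : (x * y - y * x) * d x + y * (x * d x - d x * x)
        = (x * (F y * x + y * d x) - (F y * x + y * d x) * x + (y * x * F x - F x * (y * x)))
          - ((x * F y - F y * x) + (y * F x - F x * y)) * x - y * (x * F x - F x * x) := by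
      noncomm_ring
    rw [e]
    exact P.sub_mem (P.sub_mem h0 (P.mul_mem_right _ _ (h1 x y))) (P.mul_mem_left _ _ (h x))
  -- Step 3
  have h3 : ∀ x z y : R, (x * z - z * x) * y * d x ∈ P := by
    intro x z y
    have h0 := h2 x (z * y)
    have e : (x * z - z * x) * y * d x
        = ((x * (z * y) - (z * y) * x) * d x + (z * y) * (x * d x - d x * x))
          - z * ((x * y - y * x) * d x + y * (x * d x - d x * x)) := by noncomm_ring
    rw [e]
    exact P.sub_mem h0 (P.mul_mem_left _ _ (h2 x y))
  -- Step 4: pointwise dichotomy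
  have hxor : ∀ x : R, (∀ z : R, x * z - z * x ∈ P) ∨ d x ∈ P := by
    intro x
    by_cases hdx : d x ∈ P
    · exact Or.inr hdx
    · left
      intro z
      rcases hprime (x * z - z * x) (d x) (fun r => h3 x z r) with h' | h'
      · exact h'
      · exact absurd h' hdx
  by_cases hB : ∀ x : R, d x ∈ P
  · exact Or.inr hB
  push_neg at hB
  obtain ⟨b, hb⟩ := hB
  have hbA : ∀ z : R, b * z - z * b ∈ P := (hxor b).resolve_right hb
  have hA : ∀ x z : R, x * z - z * x ∈ P := by
    intro x z
    rcases hxor x with hx | hx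
    · exact hx z
    · rcases hxor (x + b) with hxb | hxb
      · have e : x * z - z * x = ((x + b) * z - z * (x + b)) - (b * z - z * b) := by noncomm_ring
        rw [e]
        exact P.sub_mem (hxb z) (hbA z)
      · exfalso
        apply hb
        have h4 : d (x + b) - d x ∈ P := P.sub_mem hxb hx
        rwa [hd_add, add_sub_cancel_left] at h4
  left
  have hcomm : ∀ a b : P.ringCon.Quotient, a * b = b * a := by
    intro a b
    obtain ⟨x, rfl⟩ := Quotient.exists_rep a
    obtain ⟨y, rfl⟩ := Quotient.exists_rep b
    show ((x : P.ringCon.Quotient) * y) = (y : P.ringCon.Quotient) * x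
    rw [← RingCon.coe_mul, ← RingCon.coe_mul, RingCon.eq, P.rel_iff]
    exact hA x y
  refine ⟨hcomm, ?_⟩
  have hnt : Nontrivial P.ringCon.Quotient := by
    refine ⟨⟨0, 1, fun h01 => hP ?_⟩⟩
    apply P.eq_top
    rw [← RingCon.coe_zero, ← RingCon.coe_one, RingCon.eq, P.rel_iff] at h01
    simpa using P.neg_mem h01
  have hnzd : NoZeroDivisors P.ringCon.Quotient := by
    refine ⟨fun {a b} hab => ?_⟩
    obtain ⟨x, rfl⟩ := Quotient.exists_rep a
    obtain ⟨y, rfl⟩ := Quotient.exists_rep b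
    have hxy : x * y ∈ P := by
      have : ((x * y : R) : P.ringCon.Quotient) = ((0 : R) : P.ringCon.Quotient) := by
        rw [RingCon.coe_mul, RingCon.coe_zero]; exact hab
      rw [RingCon.eq, P.rel_iff] at this
      simpa using this
    have hr : ∀ r : R, x * r * y ∈ P := by
      intro r
      have e : x * r * y = (x * r - r * x) * y + r * (x * y) := by noncomm_ring
      rw [e]
      exact P.add_mem (P.mul_mem_right _ _ (hA x r)) (P.mul_mem_left _ _ hxy)
    rcases hprime x y hr with h' | h'
    · left
      show ((x : R) : P.ringCon.Quotient) = 0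
      rw [← RingCon.coe_zero, RingCon.eq, P.rel_iff]
      simpa using h'
    · right
      show ((y : R) : P.ringCon.Quotient) = 0
      rw [← RingCon.coe_zero, RingCon.eq, P.rel_iff]
      simpa using h'
  exact NoZeroDivisors.to_isDomain _
end

section
/- Let R be a ring, P a prime two-sided ideal of R, and F a generalized derivation of R with associated derivation d. If F(xy) − F(x)F(y) ∈ P for all x, y ∈ R, then either the quotient ring R/P is a commutative integral domain, or d(x) ∈ P for all x ∈ R. -/
theorem stmt_4 {R : Type*} [Ring R] (P : TwoSidedIdeal R)
    (hP : P ≠ ⊤)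
    (hprime : ∀ x y : R, (∀ r : R, x * r * y ∈ P) → x ∈ P ∨ y ∈ P)
    (d F : R → R)
    (hd_add : ∀ x y : R, d (x + y) = d x + d y)
    (hd_mul : ∀ x y : R, d (x * y) = d x * y + x * d y)
    (hF_add : ∀ x y : R, F (x + y) = F x + F y)
    (hF_mul : ∀ x y : R, F (x * y) = F x * y + x * d y)
    (h : ∀ x y : R, F (x * y) - F x * F y ∈ P) :
    ((∀ a b : P.ringCon.Quotient, a * b = b * a) ∧ IsDomain P.ringCon.Quotient) ∨ (∀ x : R, d x ∈ P) := by
  right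
  intro w
  by_contra hw
  have star : ∀ x y : R, F x * y + x * d y - F x * F y ∈ P := by
    intro x y
    have := h x y
    rwa [hF_mul] at this
  have star2 : ∀ x y : R, (x - F x) * y * d w ∈ P := by
    intro x y
    have e1 := star x (y * w)
    have e2 : (F x * y + x * d y - F x * F y) * w ∈ P := P.mul_mem_right _ _ (star x y)
    have e3 := P.sub_mem e1 e2
    have : F x * (y * w) + x * d (y * w) - F x * F (y * w) -
        (F x * y + x * d y - F x * F y) * w = (x - F x) * y * d w := by
      rw [hF_mul, hd_mul]
      noncomm_ring
    rwa [this] at e3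
  have hFx : ∀ x : R, x - F x ∈ P := by
    intro x
    rcases hprime (x - F x) (d w) (fun r => star2 x r) with h1 | h1
    · exact h1
    · exact absurd h1 hw
  have hxd : ∀ x y : R, x * d y ∈ P := by
    intro x y
    have h1 : F x * (y - F y) ∈ P := P.mul_mem_left _ _ (hFx y)
    have h2 := P.sub_mem (star x y) h1
    have : F x * y + x * d y - F x * F y - F x * (y - F y) = x * d y := by noncomm_ring
    rwa [this] at h2
  rcases hprime 1 (d w) (fun r => by simpa using hxd r w) with h1 | h1
  · exact hP (P.one_mem_iff.mp h1)
  · exact hw h1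
end

section
/- Let R be a ring, P a prime two-sided ideal of R, and F a generalized derivation of R with associated derivation d. If F(xy) + F(x)F(y) ∈ P for all x, y ∈ R, then either the quotient ring R/P is a commutative integral domain, or d(x) ∈ P for all x ∈ R. -/
theorem stmt_5 {R : Type*} [Ring R] (P : TwoSidedIdeal R)
    (hP : P ≠ ⊤)
    (hprime : ∀ x y : R, (∀ r : R, x * r * y ∈ P) → x ∈ P ∨ y ∈ P)
    (d F : R → R)
    (hd_add : ∀ x y : R, d (x + y) = d x + d y)
    (hd_mul : ∀ x y : R, d (x * y) = d x * y + x * d y)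
    (hF_add : ∀ x y : R, F (x + y) = F x + F y)
    (hF_mul : ∀ x y : R, F (x * y) = F x * y + x * d y)
    (h : ∀ x y : R, F (x * y) + F x * F y ∈ P) :
    ((∀ a b : P.ringCon.Quotient, a * b = b * a) ∧ IsDomain P.ringCon.Quotient) ∨ (∀ x : R, d x ∈ P) := by
  right
  intro z
  by_contra hz
  have key : ∀ x r : R, (F x + x) * r * d z ∈ P := by
    intro x r
    have e : (F x + x) * r * d z =
        (F (x * (r * z)) + F x * F (r * z)) - (F (x * r) + F x * F r) * z := by
      rw [hF_mul x (r * z), hF_mul r z, hF_mul x r, hd_mul r z]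
      noncomm_ring
    rw [e]
    exact P.sub_mem (h x (r * z)) (P.mul_mem_right _ _ (h x r))
  have hG : ∀ x : R, F x + x ∈ P := fun x => (hprime _ _ (key x)).resolve_right hz
  have e2 : d z = (F (1 * z) + F 1 * F z) - F 1 * (F z + z) := by
    rw [hF_mul 1 z]; noncomm_ring
  exact hz (e2 ▸ P.sub_mem (h 1 z) (P.mul_mem_left _ _ (hG z)))
end

section
/- Let R be a ring, P a prime two-sided ideal of R, and F a generalized derivation of R with associated derivation d. If F(xy) − F(y)F(x) ∈ P for all x, y ∈ R, then either the quotient ring R/P is a commutative integral domain, or d(x) ∈ P for all x ∈ R. -/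
theorem stmt_6 {R : Type*} [Ring R] (P : TwoSidedIdeal R)
    (hP : P ≠ ⊤)
    (hprime : ∀ x y : R, (∀ r : R, x * r * y ∈ P) → x ∈ P ∨ y ∈ P)
    (d F : R → R)
    (hd_add : ∀ x y : R, d (x + y) = d x + d y)
    (hd_mul : ∀ x y : R, d (x * y) = d x * y + x * d y)
    (hF_add : ∀ x y : R, F (x + y) = F x + F y)
    (hF_mul : ∀ x y : R, F (x * y) = F x * y + x * d y)
    (h : ∀ x y : R, F (x * y) - F y * F x ∈ P) :
    ((∀ a b : P.ringCon.Quotient, a * b = b * a) ∧ IsDomain P.ringCon.Quotient) ∨ (∀ x : R, d x ∈ P) := by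
  set π : R →+* P.ringCon.Quotient := P.ringCon.mk' with hπdef
  have hmem : ∀ x : R, π x = 0 ↔ x ∈ P := by
    intro x
    rw [TwoSidedIdeal.mem_iff, show (0 : P.ringCon.Quotient) = π 0 from (map_zero π).symm]
    exact RingCon.eq _
  have hsurj : Function.Surjective π := fun q => Quot.inductionOn q fun x => ⟨x, rfl⟩
  have hone : π (1 : R) ≠ 0 := fun hh => hP (P.eq_top ((hmem 1).mp hh))
  have prime' : ∀ x y : R, (∀ r : R, π x * π r * π y = 0) → π x = 0 ∨ π y = 0 := by
    intro x y hr
    refine (hprime x y fun r => (hmem _).mp ?_).imp (hmem _).mpr (hmem _).mpr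
    simpa only [map_mul] using hr r
  -- (*) : the basic relation mod P
  have star : ∀ x y : R, π (F x) * π y + π x * π (d y) = π (F y) * π (F x) := by
    intro x y
    have h0 : π (F (x * y) - F y * F x) = 0 := (hmem _).mpr (h x y)
    rw [hF_mul] at h0
    simp only [map_sub, map_add, map_mul] at h0
    exact sub_eq_zero.mp h0
  -- (★) : x y d(y) = F(y) x d(y)
  have key : ∀ x y : R, π x * π y * π (d y) = π (F y) * π x * π (d y) := by
    intro x y
    have hA : (π (F x) * π y + π x * π (d y)) * π y + π x * π y * π (d y)
        = π (F y) * (π (F x) * π y + π x * π (d y)) := by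
      have := star (x * y) y
      rw [hF_mul] at this
      simpa only [map_add, map_mul] using this
    have hB := star x y
    have e : π x * π y * π (d y) - π (F y) * π x * π (d y)
        = ((π (F x) * π y + π x * π (d y)) * π y + π x * π y * π (d y)
            - π (F y) * (π (F x) * π y + π x * π (d y)))
          - (π (F x) * π y + π x * π (d y) - π (F y) * π (F x)) * π y := by noncomm_ring
    rw [sub_eq_zero_of_eq hA, sub_eq_zero_of_eq hB] at e
    exact sub_eq_zero.mp (by rw [e]; noncomm_ring)
  -- (10) : [F y, x] w d(y) = 0
  have comm10 : ∀ y x w : R,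
      (π (F y) * π x - π x * π (F y)) * π w * π (d y) = 0 := by
    intro y x w
    have e1 : π x * π w * π y * π (d y) = π (F y) * (π x * π w) * π (d y) := by
      simpa only [map_mul] using key (x * w) y
    have e2 := key w y
    have e : (π (F y) * π x - π x * π (F y)) * π w * π (d y)
        = -(π x * π w * π y * π (d y) - π (F y) * (π x * π w) * π (d y))
          + π x * (π w * π y * π (d y) - π (F y) * π w * π (d y)) := by noncomm_ring
    rw [sub_eq_zero_of_eq e1, sub_eq_zero_of_eq e2] at e
    rw [e]; noncomm_ring
  by_cases hdP : ∀ x : R, d x ∈ P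
  · exact Or.inr hdP
  left
  push_neg at hdP
  obtain ⟨a, ha0⟩ := hdP
  have ha : π (d a) ≠ 0 := fun hh => ha0 ((hmem _).mp hh)
  have cent1 : ∀ y : R, π (d y) ≠ 0 → ∀ x : R, π (F y) * π x = π x * π (F y) := by
    intro y hy x
    rcases prime' (F y * x - x * F y) (d y) (fun r => by
        simpa only [map_sub, map_mul] using comm10 y x r) with h1 | h2
    · simp only [map_sub, map_mul] at h1
      exact sub_eq_zero.mp h1
    · exact absurd h2 hy
  have centF : ∀ y x : R, π (F y) * π x = π x * π (F y) := by
    intro y x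
    by_cases hy : π (d y) = 0
    · have hya : π (d (y + a)) ≠ 0 := by
        rw [hd_add]; simp only [map_add, hy, zero_add]; exact ha
      have c1 := cent1 (y + a) hya x
      rw [hF_add] at c1
      simp only [map_add] at c1
      have c2 := cent1 a ha x
      have e : π (F y) * π x - π x * π (F y)
          = ((π (F y) + π (F a)) * π x - π x * (π (F y) + π (F a)))
            - (π (F a) * π x - π x * π (F a)) := by noncomm_ring
      rw [sub_eq_zero_of_eq c1, sub_eq_zero_of_eq c2] at e
      exact sub_eq_zero.mp (by rw [e]; noncomm_ring)
    · exact cent1 y hy x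
  have hD1 : π (d 1) = 0 := by
    have h11 := hd_mul 1 1
    simp only [mul_one, one_mul] at h11
    have := congrArg π h11
    simp only [map_add] at this
    exact (left_eq_add.mp this)
  have hF1 : ∀ x : R, π (F x) = π (F 1) * π (F x) := by
    intro x
    have := star x 1
    simpa only [map_one, hD1, mul_one, mul_zero, add_zero] using this
  have hF1' : ∀ x : R, π (F x) * π (F 1) = π (F x) := fun x =>
    (centF 1 (F x)).symm.trans (hF1 x).symm
  -- (13)
  have L13 : ∀ x y z : R, π (F x) * (π z * π y - π y * π z)
      = π x * (π (d y) * π z - π (d z) * π y - π z * π (d y) + π (F y) * π (d z)) := by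
    intro x y z
    have e1 : (π (F x) * π z + π x * π (d z)) * π y + π x * π z * π (d y)
        = π (F y) * (π (F x) * π z + π x * π (d z)) := by
      have := star (x * z) y
      rw [hF_mul] at this
      simpa only [map_add, map_mul] using this
    have e2 := star x y
    have e3 := centF y x
    have e : π (F x) * (π z * π y - π y * π z)
        - π x * (π (d y) * π z - π (d z) * π y - π z * π (d y) + π (F y) * π (d z))
        = ((π (F x) * π z + π x * π (d z)) * π y + π x * π z * π (d y)
            - π (F y) * (π (F x) * π z + π x * π (d z)))
          - (π (F x) * π y + π x * π (d y) - π (F y) * π (F x)) * π z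
          + (π (F y) * π x - π x * π (F y)) * π (d z) := by noncomm_ring
    rw [sub_eq_zero_of_eq e1, sub_eq_zero_of_eq e2, sub_eq_zero_of_eq e3] at e
    exact sub_eq_zero.mp (by rw [e]; noncomm_ring)
  -- (14)
  have L14 : ∀ x w y z : R,
      π (F x) * ((π (F w) - π w) * (π z * π y - π y * π z)) = 0 := by
    intro x w y z
    have e1 : (π (F w) * π x + π w * π (d x)) * (π z * π y - π y * π z)
        = π w * π x * (π (d y) * π z - π (d z) * π y - π z * π (d y) + π (F y) * π (d z)) := by
      have := L13 (w * x) y z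
      rw [hF_mul] at this
      simpa only [map_add, map_mul] using this
    have e2 := L13 x y z
    have e3 := centF x w
    have e4 := star w x
    have e : π (F x) * ((π (F w) - π w) * (π z * π y - π y * π z)) - 0
        = -((π (F w) * π x + π w * π (d x) - π (F x) * π (F w)) * (π z * π y - π y * π z))
          + ((π (F w) * π x + π w * π (d x)) * (π z * π y - π y * π z)
             - π w * π x * (π (d y) * π z - π (d z) * π y - π z * π (d y) + π (F y) * π (d z)))
          - (π (F x) * π w - π w * π (F x)) * (π z * π y - π y * π z)
          - π w * (π (F x) * (π z * π y - π y * π z)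
             - π x * (π (d y) * π z - π (d z) * π y - π z * π (d y) + π (F y) * π (d z))) := by
      noncomm_ring
    rw [sub_eq_zero_of_eq e1, sub_eq_zero_of_eq e2, sub_eq_zero_of_eq e3,
      sub_eq_zero_of_eq e4] at e
    exact sub_eq_zero.mp (by rw [e]; noncomm_ring)
  -- (18)
  have L18 : ∀ x u y z : R,
      π (F x) * (π (d u) * (π z * π y - π y * π z)) = 0 := by
    intro x u y z
    have e1 : π (F x) * ((π (F 1) * π u + π (d u) - π u) * (π z * π y - π y * π z)) = 0 := by
      have := L14 x (1 * u) y z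
      rw [hF_mul] at this
      simpa only [map_add, map_mul, map_one, one_mul] using this
    have e2 := hF1' x
    have e : π (F x) * (π (d u) * (π z * π y - π y * π z)) - 0
        = π (F x) * ((π (F 1) * π u + π (d u) - π u) * (π z * π y - π y * π z)) - 0
          - (π (F x) * π (F 1) - π (F x)) * (π u * (π z * π y - π y * π z)) := by
      noncomm_ring
    rw [e1, sub_eq_zero_of_eq e2] at e
    exact sub_eq_zero.mp (by rw [e]; noncomm_ring)
  -- (19)
  have step19 : ∀ x v u y z : R,
      π x * (π (d v) * (π (d u) * (π z * π y - π y * π z))) = 0 := by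
    intro x v u y z
    have e1 : (π (F x) * π v + π x * π (d v)) * (π (d u) * (π z * π y - π y * π z)) = 0 := by
      have := L18 (x * v) u y z
      rw [hF_mul] at this
      simpa only [map_add, map_mul] using this
    have e3 := centF x v
    have e4 := L18 x u y z
    have e : π x * (π (d v) * (π (d u) * (π z * π y - π y * π z))) - 0
        = (π (F x) * π v + π x * π (d v)) * (π (d u) * (π z * π y - π y * π z))
          - (π (F x) * π v - π v * π (F x)) * (π (d u) * (π z * π y - π y * π z))
          - π v * (π (F x) * (π (d u) * (π z * π y - π y * π z))) := by
      noncomm_ring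
    rw [e1, sub_eq_zero_of_eq e3, e4] at e
    exact sub_eq_zero.mp (by rw [e]; noncomm_ring)
  have L19 : ∀ v u y z : R,
      π (d v) * (π (d u) * (π z * π y - π y * π z)) = 0 := by
    intro v u y z
    rcases prime' 1 (d v * (d u * (z * y - y * z))) (fun r => by
        simp only [map_mul, map_sub, map_one, one_mul]
        exact step19 r v u y z) with h1 | h2
    · exact absurd h1 hone
    · simpa only [map_mul, map_sub] using h2
  -- (20)
  have step20 : ∀ s v u y z : R,
      π (d s) * (π v * (π (d u) * (π z * π y - π y * π z))) = 0 := by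
    intro s v u y z
    have e1 : (π (d s) * π v + π s * π (d v)) * (π (d u) * (π z * π y - π y * π z)) = 0 := by
      have := L19 (s * v) u y z
      rw [hd_mul] at this
      simpa only [map_add, map_mul] using this
    have e2 := L19 v u y z
    have e : π (d s) * (π v * (π (d u) * (π z * π y - π y * π z))) - 0
        = (π (d s) * π v + π s * π (d v)) * (π (d u) * (π z * π y - π y * π z))
          - π s * (π (d v) * (π (d u) * (π z * π y - π y * π z))) := by
      noncomm_ring
    rw [e1, e2] at e
    exact sub_eq_zero.mp (by rw [e]; noncomm_ring)
  have L20 : ∀ u y z : R, π (d u) * (π z * π y - π y * π z) = 0 := by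
    intro u y z
    rcases prime' (d a) (d u * (z * y - y * z)) (fun r => by
        simp only [map_mul, map_sub, mul_assoc]
        simpa only [mul_assoc] using step20 a r u y z) with h1 | h2
    · exact absurd h1 ha
    · simpa only [map_mul, map_sub] using h2
  -- final : commutators vanish
  have stepfin : ∀ u v y z : R,
      π (d u) * (π v * (π z * π y - π y * π z)) = 0 := by
    intro u v y z
    have e1 : (π (d u) * π v + π u * π (d v)) * (π z * π y - π y * π z) = 0 := by
      have := L20 (u * v) y z
      rw [hd_mul] at this
      simpa only [map_add, map_mul] using this
    have e2 := L20 v y z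
    have e : π (d u) * (π v * (π z * π y - π y * π z)) - 0
        = (π (d u) * π v + π u * π (d v)) * (π z * π y - π y * π z)
          - π u * (π (d v) * (π z * π y - π y * π z)) := by
      noncomm_ring
    rw [e1, e2] at e
    exact sub_eq_zero.mp (by rw [e]; noncomm_ring)
  have comm : ∀ z y : R, π z * π y = π y * π z := by
    intro z y
    rcases prime' (d a) (z * y - y * z) (fun r => by
        simp only [map_mul, map_sub, mul_assoc]
        simpa only [mul_assoc] using stepfin a r y z) with h1 | h2
    · exact absurd h1 ha
    · simp only [map_sub, map_mul] at h2
      exact sub_eq_zero.mp h2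
  constructor
  · intro q1 q2
    obtain ⟨x, rfl⟩ := hsurj q1
    obtain ⟨y, rfl⟩ := hsurj q2
    exact comm x y
  · haveI : Nontrivial P.ringCon.Quotient := ⟨⟨π 1, 0, hone⟩⟩
    haveI : NoZeroDivisors P.ringCon.Quotient := by
      constructor
      intro q1 q2 hq
      obtain ⟨x, rfl⟩ := hsurj q1
      obtain ⟨y, rfl⟩ := hsurj q2
      refine (prime' x y fun r => ?_).imp id id
      rw [mul_assoc, comm r y, ← mul_assoc, hq, zero_mul]
    exact NoZeroDivisors.to_isDomain _
end

section
/- Let R be a ring, P a prime two-sided ideal of R, and F a generalized derivation of R with associated derivation d. If F(xy) + F(y)F(x) ∈ P for all x, y ∈ R, then either the quotient ring R/P is a commutative integral domain, or d(x) ∈ P for all x ∈ R. -/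
theorem stmt_7 {R : Type*} [Ring R] (P : TwoSidedIdeal R)
    (hP : P ≠ ⊤)
    (hprime : ∀ x y : R, (∀ r : R, x * r * y ∈ P) → x ∈ P ∨ y ∈ P)
    (d F : R → R)
    (hd_add : ∀ x y : R, d (x + y) = d x + d y)
    (hd_mul : ∀ x y : R, d (x * y) = d x * y + x * d y)
    (hF_add : ∀ x y : R, F (x + y) = F x + F y)
    (hF_mul : ∀ x y : R, F (x * y) = F x * y + x * d y)
    (h : ∀ x y : R, F (x * y) + F y * F x ∈ P) :
    ((∀ a b : P.ringCon.Quotient, a * b = b * a) ∧ IsDomain P.ringCon.Quotient) ∨ (∀ x : R, d x ∈ P) := by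
  classical
  by_cases hall : ∀ x : R, d x ∈ P
  · exact Or.inr hall
  left
  push_neg at hall
  obtain ⟨x₀, hx₀⟩ := hall
  -- basic relation E
  have hE : ∀ x y : R, F x * y + x * d y + F y * F x ∈ P := by
    intro x y
    have := h x y
    rwa [hF_mul] at this
  -- substitute y ↦ y*z in E and subtract E*z
  have hstar : ∀ x y z : R,
      x*y*d z + F y*(z*F x - F x*z) + y*d z*F x ∈ P := by
    intro x y z
    have h1 := hE x (y*z)
    rw [hF_mul, hd_mul] at h1
    have h2 := P.mul_mem_right _ z (hE x y)
    have h3 := P.sub_mem h1 h2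
    rw [show x*y*d z + F y*(z*F x - F x*z) + y*d z*F x
        = (F x * (y*z) + x * (d y * z + y * d z) + (F y * z + y * d z) * F x)
          - (F x * y + x * d y + F y * F x) * z from by noncomm_ring]
    exact h3
  -- substitute x ↦ x*z in E and subtract E*z
  have hG : ∀ x y z : R,
      F x*(z*y - y*z) + x*d z*y + x*(z*d y - d y*z) + F y*x*d z ∈ P := by
    intro x y z
    have h1 := hE (x*z) y
    rw [hF_mul] at h1
    have h2 := P.mul_mem_right _ z (hE x y)
    have h3 := P.sub_mem h1 h2
    rw [show F x*(z*y - y*z) + x*d z*y + x*(z*d y - d y*z) + F y*x*d z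
        = ((F x * z + x * d z) * y + (x*z) * d y + F y * (F x * z + x * d z))
          - (F x * y + x * d y + F y * F x) * z from by noncomm_ring]
    exact h3
  -- y = z in hG
  have hH : ∀ x y : R, (x*y + F y*x)*d y ∈ P := by
    intro x y
    have h1 := hG x y y
    rw [show (x*y + F y*x)*d y
        = F x*(y*y - y*y) + x*d y*y + x*(y*d y - d y*y) + F y*x*d y from by noncomm_ring]
    exact h1
  have hI : ∀ w x : R, (w*F x₀ - F x₀*w)*x*d x₀ ∈ P := by
    intro w x
    have h1 := hH (w*x) x₀
    have h2 := P.mul_mem_left w _ (hH x x₀)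
    have h3 := P.sub_mem h2 h1
    rw [show (w*F x₀ - F x₀*w)*x*d x₀
        = w*((x*x₀ + F x₀*x)*d x₀) - ((w*x)*x₀ + F x₀*(w*x))*d x₀ from by noncomm_ring]
    exact h3
  -- F x₀ is central mod P
  have hcent : ∀ w : R, w*F x₀ - F x₀*w ∈ P := by
    intro w
    rcases hprime _ _ (fun r => hI w r) with h1 | h1
    · exact h1
    · exact absurd h1 hx₀
  -- x₀ + F x₀ ∈ P
  have hK : x₀ + F x₀ ∈ P := by
    have key : ∀ y z : R, (x₀ + F x₀)*y*d z ∈ P := by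
      intro y z
      have h1 := hstar x₀ y z
      have h2 : F y*(z*F x₀ - F x₀*z) ∈ P := P.mul_mem_left _ _ (hcent z)
      have h3 : (y*d z)*F x₀ - F x₀*(y*d z) ∈ P := hcent (y * d z)
      have h4 := P.sub_mem (P.sub_mem h1 h2) h3
      rw [show (x₀ + F x₀)*y*d z
          = (x₀*y*d z + F y*(z*F x₀ - F x₀*z) + y*d z*F x₀)
            - F y*(z*F x₀ - F x₀*z) - ((y*d z)*F x₀ - F x₀*(y*d z)) from by noncomm_ring]
      exact h4
    rcases hprime _ _ (fun r => key r x₀) with h1 | h1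
    · exact h1
    · exact absurd h1 hx₀
  -- x₀ is central mod P
  have hx0c : ∀ w : R, w*x₀ - x₀*w ∈ P := by
    intro w
    have h1 : w*(x₀ + F x₀) ∈ P := P.mul_mem_left _ _ hK
    have h2 : (x₀ + F x₀)*w ∈ P := P.mul_mem_right _ _ hK
    have h3 := P.sub_mem (P.sub_mem h1 h2) (hcent w)
    rw [show w*x₀ - x₀*w
        = (w*(x₀ + F x₀) - (x₀ + F x₀)*w) - (w*F x₀ - F x₀*w) from by noncomm_ring]
    exact h3
  -- d x₀ is central mod P
  have hdx0c : ∀ z : R, z*d x₀ - d x₀*z ∈ P := by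
    intro z
    have h1 := hG 1 x₀ z
    have h2 : F 1*(z*x₀ - x₀*z) ∈ P := P.mul_mem_left _ _ (hx0c z)
    have h3 : (x₀ + F x₀)*d z ∈ P := P.mul_mem_right _ _ hK
    have h4 : d z*x₀ - x₀*(d z) ∈ P := hx0c (d z)
    have h5 := P.sub_mem (P.sub_mem (P.sub_mem h1 h2) h4) h3
    rw [show z*d x₀ - d x₀*z
        = (F 1*(z*x₀ - x₀*z) + 1*d z*x₀ + 1*(z*d x₀ - d x₀*z) + F x₀*1*d z)
          - F 1*(z*x₀ - x₀*z) - (d z*x₀ - x₀*(d z)) - (x₀ + F x₀)*d z from by noncomm_ring]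
    exact h5
  have hL : ∀ x y : R, (x*y + y*F x)*d x₀ ∈ P := by
    intro x y
    have h1 := hstar x y x₀
    have h2 : x₀*F x - F x*x₀ ∈ P := by
      have h2' := P.neg_mem (hx0c (F x))
      rw [show x₀*F x - F x*x₀ = -(F x*x₀ - x₀*F x) from by noncomm_ring]
      exact h2'
    have h2'' : F y*(x₀*F x - F x*x₀) ∈ P := P.mul_mem_left _ _ h2
    have h3 : y*(F x*d x₀ - d x₀*F x) ∈ P := P.mul_mem_left _ _ (hdx0c (F x))
    have h4 := P.add_mem (P.sub_mem h1 h2'') h3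
    rw [show (x*y + y*F x)*d x₀
        = (x*y*d x₀ + F y*(x₀*F x - F x*x₀) + y*d x₀*F x)
          - F y*(x₀*F x - F x*x₀) + y*(F x*d x₀ - d x₀*F x) from by noncomm_ring]
    exact h4
  -- commutativity mod P
  have hcomm : ∀ x r : R, x*r - r*x ∈ P := by
    intro x r
    have key : ∀ y : R, (x*r - r*x)*y*d x₀ ∈ P := by
      intro y
      have h1 := hL x (r*y)
      have h2 := P.mul_mem_left r _ (hL x y)
      have h3 := P.sub_mem h1 h2
      rw [show (x*r - r*x)*y*d x₀
          = (x*(r*y) + (r*y)*F x)*d x₀ - r*((x*y + y*F x)*d x₀) from by noncomm_ring]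
      exact h3
    rcases hprime _ _ key with h1 | h1
    · exact h1
    · exact absurd h1 hx₀
  -- transfer to the quotient
  have hsurj : ∀ a : P.ringCon.Quotient, ∃ x : R, a = (x : P.ringCon.Quotient) :=
    fun a => Quot.inductionOn a (fun x => ⟨x, (RingCon.quot_mk_eq_coe _ x).symm⟩)
  have hcommQ : ∀ a b : P.ringCon.Quotient, a * b = b * a := by
    intro a b
    obtain ⟨x, rfl⟩ := hsurj a
    obtain ⟨y, rfl⟩ := hsurj b
    rw [← RingCon.coe_mul, ← RingCon.coe_mul, RingCon.eq, P.rel_iff]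
    exact hcomm x y
  refine ⟨hcommQ, ?_⟩
  haveI : Nontrivial P.ringCon.Quotient := by
    refine ⟨1, 0, fun heq => ?_⟩
    rw [← RingCon.coe_one, ← RingCon.coe_zero, RingCon.eq, P.rel_iff, sub_zero] at heq
    exact hP (P.eq_top heq)
  haveI : NoZeroDivisors P.ringCon.Quotient := by
    refine ⟨fun {a b} hab => ?_⟩
    obtain ⟨x, rfl⟩ := hsurj a
    obtain ⟨y, rfl⟩ := hsurj b
    rw [← RingCon.coe_mul, ← RingCon.coe_zero, RingCon.eq, P.rel_iff, sub_zero] at hab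
    have key : ∀ r : R, x * r * y ∈ P := by
      intro r
      have h1 : x*y*r ∈ P := P.mul_mem_right _ _ hab
      have h2 : x*(r*y - y*r) ∈ P := P.mul_mem_left _ _ (hcomm r y)
      have h3 := P.add_mem h1 h2
      rw [show x*r*y = x*y*r + x*(r*y - y*r) from by noncomm_ring]
      exact h3
    rcases hprime _ _ key with h1 | h1
    · left
      rw [← RingCon.coe_zero, RingCon.eq, P.rel_iff, sub_zero]
      exact h1
    · right
      rw [← RingCon.coe_zero, RingCon.eq, P.rel_iff, sub_zero]
      exact h1
  exact NoZeroDivisors.to_isDomain _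
end

section
/- Let R be a ring, P a prime two-sided ideal of R, and F a generalized derivation of R with associated derivation d. If F(xy) − xy ∈ P for all x, y ∈ R, or F(xy) + xy ∈ P for all x, y ∈ R, then either the quotient ring R/P is a commutative integral domain, or d(x) ∈ P for all x ∈ R. -/
theorem stmt_8 {R : Type*} [Ring R] (P : TwoSidedIdeal R)
    (hP : P ≠ ⊤)
    (hprime : ∀ x y : R, (∀ r : R, x * r * y ∈ P) → x ∈ P ∨ y ∈ P)
    (d F : R → R)
    (hd_add : ∀ x y : R, d (x + y) = d x + d y)
    (hd_mul : ∀ x y : R, d (x * y) = d x * y + x * d y)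
    (hF_add : ∀ x y : R, F (x + y) = F x + F y)
    (hF_mul : ∀ x y : R, F (x * y) = F x * y + x * d y)
    (h : (∀ x y : R, F (x * y) - x * y ∈ P) ∨ (∀ x y : R, F (x * y) + x * y ∈ P)) :
    ((∀ a b : P.ringCon.Quotient, a * b = b * a) ∧ IsDomain P.ringCon.Quotient) ∨ (∀ x : R, d x ∈ P) := by
  have key : ∀ r z : R, r * d z ∈ P := by
    intro r z
    rcases h with h | h
    · have h1 := h (1 * r) z
      rw [hF_mul (1 * r) z] at h1
      have h3 : (F (1 * r) - 1 * r) * z ∈ P := P.mul_mem_right _ _ (h 1 r)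
      have h4 := P.sub_mem h1 h3
      have e : F (1 * r) * z + (1 * r) * d z - (1 * r) * z - (F (1 * r) - 1 * r) * z
          = r * d z := by noncomm_ring
      rwa [e] at h4
    · have h1 := h (1 * r) z
      rw [hF_mul (1 * r) z] at h1
      have h3 : (F (1 * r) + 1 * r) * z ∈ P := P.mul_mem_right _ _ (h 1 r)
      have h4 := P.sub_mem h1 h3
      have e : F (1 * r) * z + (1 * r) * d z + (1 * r) * z - (F (1 * r) + 1 * r) * z
          = r * d z := by noncomm_ring
      rwa [e] at h4
  right
  intro x
  rcases hprime 1 (d x) (fun r => by simpa using key r x) with h1 | h1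
  · exact absurd (P.eq_top h1) hP
  · exact h1
end

section
/- Let R be a ring, P a prime two-sided ideal of R, and F a generalized derivation of R with associated derivation d. If F(xy) − yx ∈ P for all x, y ∈ R, or F(xy) + yx ∈ P for all x, y ∈ R, then either the quotient ring R/P is a commutative integral domain, or d(x) ∈ P for all x ∈ R. -/
theorem stmt_9 {R : Type*} [Ring R] (P : TwoSidedIdeal R)
    (hP : P ≠ ⊤)
    (hprime : ∀ x y : R, (∀ r : R, x * r * y ∈ P) → x ∈ P ∨ y ∈ P)
    (d F : R → R)
    (hd_add : ∀ x y : R, d (x + y) = d x + d y)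
    (hd_mul : ∀ x y : R, d (x * y) = d x * y + x * d y)
    (hF_add : ∀ x y : R, F (x + y) = F x + F y)
    (hF_mul : ∀ x y : R, F (x * y) = F x * y + x * d y)
    (h : (∀ x y : R, F (x * y) - y * x ∈ P) ∨ (∀ x y : R, F (x * y) + y * x ∈ P)) :
    ((∀ a b : P.ringCon.Quotient, a * b = b * a) ∧ IsDomain P.ringCon.Quotient) ∨ (∀ x : R, d x ∈ P) := by
  have hF2 : ∀ x y z : R, F (x * (y * z)) = F (x * y) * z + x * y * d z := by
    intro x y z; rw [← mul_assoc, hF_mul]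
  have key : ∀ x r y z : R, (x * r - r * x) * y * d z ∈ P := by
    rcases h with h | h
    · have C : ∀ x y z : R, x * y * d z + (y * (x * z) - y * (z * x)) ∈ P := by
        intro x y z
        have e : x * y * d z + (y * (x * z) - y * (z * x)) =
            (F (x * (y * z)) - (y * z) * x) - (F (x * y) - y * x) * z := by
          rw [hF2]; noncomm_ring
        rw [e]
        exact P.sub_mem (h x (y * z)) (P.mul_mem_right _ z (h x y))
      intro x r y z
      have e : (x * r - r * x) * y * d z =
          (x * (r * y) * d z + ((r * y) * (x * z) - (r * y) * (z * x)))
          - r * (x * y * d z + (y * (x * z) - y * (z * x))) := by noncomm_ring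
      rw [e]
      exact P.sub_mem (C x (r * y) z) (P.mul_mem_left r _ (C x y z))
    · have C : ∀ x y z : R, x * y * d z - (y * (x * z) - y * (z * x)) ∈ P := by
        intro x y z
        have e : x * y * d z - (y * (x * z) - y * (z * x)) =
            (F (x * (y * z)) + (y * z) * x) - (F (x * y) + y * x) * z := by
          rw [hF2]; noncomm_ring
        rw [e]
        exact P.sub_mem (h x (y * z)) (P.mul_mem_right _ z (h x y))
      intro x r y z
      have e : (x * r - r * x) * y * d z =
          (x * (r * y) * d z - ((r * y) * (x * z) - (r * y) * (z * x)))
          - r * (x * y * d z - (y * (x * z) - y * (z * x))) := by noncomm_ring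
      rw [e]
      exact P.sub_mem (C x (r * y) z) (P.mul_mem_left r _ (C x y z))
  by_cases hd : ∀ x, d x ∈ P
  · exact Or.inr hd
  push_neg at hd
  obtain ⟨z, hz⟩ := hd
  have comm : ∀ x r : R, x * r - r * x ∈ P := by
    intro x r
    rcases hprime _ _ (fun y => key x r y z) with h' | h'
    · exact h'
    · exact absurd h' hz
  left
  have hcq : ∀ a b : P.ringCon.Quotient, a * b = b * a := by
    intro a b
    obtain ⟨x, rfl⟩ := Quotient.exists_rep a
    obtain ⟨y, rfl⟩ := Quotient.exists_rep b
    show ((x * y : R) : P.ringCon.Quotient) = ((y * x : R) : P.ringCon.Quotient)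
    rw [RingCon.eq, P.rel_iff]
    exact comm x y
  refine ⟨hcq, ?_⟩
  have hnt : Nontrivial P.ringCon.Quotient := by
    refine ⟨(0 : R), (1 : R), fun h01 => hP ?_⟩
    rw [RingCon.eq, P.rel_iff] at h01
    exact P.one_mem_iff.mp (by simpa using P.neg_mem h01)
  have hnzd : NoZeroDivisors P.ringCon.Quotient := by
    constructor
    intro a b hab
    obtain ⟨x, rfl⟩ := Quotient.exists_rep a
    obtain ⟨y, rfl⟩ := Quotient.exists_rep b
    have hxy : x * y ∈ P := by
      have : ((x * y : R) : P.ringCon.Quotient) = ((0 : R) : P.ringCon.Quotient) := by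
        rw [RingCon.coe_mul, RingCon.coe_zero]; exact hab
      rw [RingCon.eq, P.rel_iff] at this
      simpa using this
    have hall : ∀ r : R, x * r * y ∈ P := by
      intro r
      have e : x * r * y = (x * r - r * x) * y + r * (x * y) := by noncomm_ring
      rw [e]
      exact P.add_mem (P.mul_mem_right _ y (comm x r)) (P.mul_mem_left r _ hxy)
    rcases hprime x y hall with hx | hy
    · left
      show ((x : R) : P.ringCon.Quotient) = ((0 : R) : P.ringCon.Quotient)
      rw [RingCon.eq, P.rel_iff]; simpa using hx
    · right
      show ((y : R) : P.ringCon.Quotient) = ((0 : R) : P.ringCon.Quotient)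
      rw [RingCon.eq, P.rel_iff]; simpa using hy
  exact NoZeroDivisors.to_isDomain _
end

section
/- Let R be a ring, P a prime two-sided ideal of R, and F a generalized derivation of R with associated derivation d. If F(x)F(y) − xy ∈ P for all x, y ∈ R, or F(x)F(y) + xy ∈ P for all x, y ∈ R, then either the quotient ring R/P is a commutative integral domain, or d(x) ∈ P for all x ∈ R. -/
theorem stmt_10 {R : Type*} [Ring R] (P : TwoSidedIdeal R)
    (hP : P ≠ ⊤)
    (hprime : ∀ x y : R, (∀ r : R, x * r * y ∈ P) → x ∈ P ∨ y ∈ P)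
    (d F : R → R)
    (hd_add : ∀ x y : R, d (x + y) = d x + d y)
    (hd_mul : ∀ x y : R, d (x * y) = d x * y + x * d y)
    (hF_add : ∀ x y : R, F (x + y) = F x + F y)
    (hF_mul : ∀ x y : R, F (x * y) = F x * y + x * d y)
    (h : (∀ x y : R, F x * F y - x * y ∈ P) ∨ (∀ x y : R, F x * F y + x * y ∈ P)) :
    ((∀ a b : P.ringCon.Quotient, a * b = b * a) ∧ IsDomain P.ringCon.Quotient) ∨ (∀ x : R, d x ∈ P) := by
  obtain ⟨s, hs⟩ : ∃ s : R, ∀ x y : R, F x * F y + s * (x * y) ∈ P := by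
    rcases h with h | h
    · exact ⟨-1, fun x y => by simpa [neg_one_mul, ← sub_eq_add_neg] using h x y⟩
    · exact ⟨1, fun x y => by simpa using h x y⟩
  have key1 : ∀ x y z : R, F x * y * d z ∈ P := by
    intro x y z
    have e : F x * y * d z =
        (F x * F (y * z) + s * (x * (y * z))) - (F x * F y + s * (x * y)) * z := by
      rw [hF_mul]; noncomm_ring
    rw [e]
    exact P.sub_mem (hs x (y * z)) (P.mul_mem_right _ _ (hs x y))
  have key2 : ∀ w y z : R, d w * y * d z ∈ P := by
    intro w y z
    have e : d w * y * d z = F (1 * w) * y * d z - F 1 * (w * y) * d z := by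
      rw [hF_mul]; noncomm_ring
    rw [e]
    exact P.sub_mem (key1 (1 * w) y z) (key1 1 (w * y) z)
  right
  intro z
  rcases hprime (d z) (d z) (fun r => key2 z r z) with hz | hz <;> exact hz
end

section
/- Let R be a ring, P a prime two-sided ideal of R, and F a generalized derivation of R with associated derivation d. If F(x)F(y) − yx ∈ P for all x, y ∈ R, or F(x)F(y) + yx ∈ P for all x, y ∈ R, then either the quotient ring R/P is a commutative integral domain, or d(x) ∈ P for all x ∈ R. -/
/-!
Pass to the prime ring `Q = R/P` with `f = π ∘ F`, `δ = π ∘ d`, where both hypotheses read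
`f x * f y = ε • (y * x)` for a sign `ε = ±1`. Expanding `f x * f (y z)` gives
`f x * y * δ z = ε • y (z x - x z)`; substituting `t y` for `y` and comparing with `t` times the
same identity leaves `(f x * t - t * f x) * y * δ z = 0` for all `y`, so by primeness every `f x`
is central unless `δ = 0`. Then `ε • x = f x * f 1` is central, so `Q` is commutative, and a
commutative prime ring has no zero divisors.
-/

open Function

def IsPrimeRing (Q : Type*) [Ring Q] : Prop :=
  ∀ a b : Q, (∀ r : Q, a * r * b = 0) → a = 0 ∨ b = 0

theorem IsPrimeRing.noZeroDivisors {Q : Type*} [Ring Q] (hQ : IsPrimeRing Q)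
    (hcomm : ∀ a b : Q, Commute a b) : NoZeroDivisors Q where
  eq_zero_or_eq_zero_of_mul_eq_zero {a b} hab := hQ a b fun r => by
    rw [(hcomm a r).eq, mul_assoc, hab, mul_zero]

theorem TwoSidedIdeal.mem_iff_mk'_eq_zero {R : Type*} [Ring R] (P : TwoSidedIdeal R) {x : R} :
    x ∈ P ↔ P.ringCon.mk' x = 0 := by
  rw [← TwoSidedIdeal.mem_ker, TwoSidedIdeal.ker_ringCon_mk']

theorem TwoSidedIdeal.isPrimeRing_quotient {R : Type*} [Ring R] (P : TwoSidedIdeal R)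
    (hprime : ∀ x y : R, (∀ r : R, x * r * y ∈ P) → x ∈ P ∨ y ∈ P) :
    IsPrimeRing P.ringCon.Quotient := by
  intro a b hab
  obtain ⟨x, rfl⟩ := P.ringCon.mk'_surjective a
  obtain ⟨y, rfl⟩ := P.ringCon.mk'_surjective b
  simp only [← P.mem_iff_mk'_eq_zero] at hab ⊢
  exact hprime x y fun r => by simpa [P.mem_iff_mk'_eq_zero] using hab (P.ringCon.mk' r)

theorem TwoSidedIdeal.nontrivial_quotient {R : Type*} [Ring R] (P : TwoSidedIdeal R) (hP : P ≠ ⊤) :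
    Nontrivial P.ringCon.Quotient :=
  ⟨0, 1, fun h => hP <| P.eq_top <| by simpa [P.mem_iff_mk'_eq_zero] using h.symm⟩

namespace GeneralizedDerivation

variable {R Q : Type*} [Ring R] [Ring Q] {π : R →+* Q} {f δ : R → Q} {ε : ℤˣ}

theorem mul_mul_eq_smul_mul_commutator
    (hf_mul : ∀ x y, f (x * y) = f x * π y + π x * δ y)
    (hff : ∀ x y, f x * f y = ε • (π y * π x)) (x y z : R) :
    f x * π y * δ z = ε • (π y * (π z * π x - π x * π z)) := by
  have key := hff x (y * z)
  rw [hf_mul, mul_add, ← mul_assoc, hff, map_mul, smul_mul_assoc, ← mul_assoc] at key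
  rw [eq_sub_of_add_eq' key]
  simp only [mul_sub, smul_sub, mul_assoc]

theorem commutator_mul_mul_eq_zero
    (hf_mul : ∀ x y, f (x * y) = f x * π y + π x * δ y)
    (hff : ∀ x y, f x * f y = ε • (π y * π x)) (x t y z : R) :
    (f x * π t - π t * f x) * π y * δ z = 0 := by
  have h₁ := mul_mul_eq_smul_mul_commutator hf_mul hff x (t * y) z
  have h₂ := congrArg (π t * ·) (mul_mul_eq_smul_mul_commutator hf_mul hff x y z)
  simp only [map_mul, mul_smul_comm, ← mul_assoc] at h₁ h₂
  rw [sub_mul, sub_mul, sub_eq_zero, h₁, h₂]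

theorem commute_of_ne_zero (hQ : IsPrimeRing Q) (hπ : Surjective π)
    (hf_mul : ∀ x y, f (x * y) = f x * π y + π x * δ y)
    (hff : ∀ x y, f x * f y = ε • (π y * π x)) {z : R} (hz : δ z ≠ 0) (x : R) (a : Q) :
    Commute (f x) a := by
  obtain ⟨t, rfl⟩ := hπ a
  refine sub_eq_zero.mp <| (hQ _ (δ z) fun r => ?_).resolve_right hz
  obtain ⟨y, rfl⟩ := hπ r
  exact commutator_mul_mul_eq_zero hf_mul hff x t y z

theorem commute_of_forall_commute (hπ : Surjective π) (hff : ∀ x y, f x * f y = ε • (π y * π x))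
    (hf : ∀ x a, Commute (f x) a) (a b : Q) : Commute a b := by
  obtain ⟨x, rfl⟩ := hπ a
  have h := (hf x b).mul_left (hf 1 b)
  rwa [hff, map_one, one_mul, Commute.smul_left_iff] at h

theorem commute_or_eq_zero (hQ : IsPrimeRing Q) (hπ : Surjective π)
    (hf_mul : ∀ x y, f (x * y) = f x * π y + π x * δ y)
    (hff : ∀ x y, f x * f y = ε • (π y * π x)) :
    (∀ a b : Q, Commute a b) ∨ ∀ z, δ z = 0 := by
  refine or_iff_not_imp_right.mpr fun hδ => ?_
  obtain ⟨z, hz⟩ := not_forall.mp hδ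
  exact commute_of_forall_commute hπ hff (commute_of_ne_zero hQ hπ hf_mul hff hz)

end GeneralizedDerivation

theorem stmt_11_general {R : Type*} [Ring R] (P : TwoSidedIdeal R)
    (hP : P ≠ ⊤)
    (hprime : ∀ x y : R, (∀ r : R, x * r * y ∈ P) → x ∈ P ∨ y ∈ P)
    (d F : R → R)
    (hF_mul : ∀ x y : R, F (x * y) = F x * y + x * d y)
    (h : (∀ x y : R, F x * F y - y * x ∈ P) ∨ (∀ x y : R, F x * F y + y * x ∈ P)) :
    ((∀ a b : P.ringCon.Quotient, a * b = b * a) ∧ IsDomain P.ringCon.Quotient) ∨ (∀ x : R, d x ∈ P) := by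
  let π := P.ringCon.mk'
  have hf_mul (x y : R) : π (F (x * y)) = π (F x) * π y + π x * π (d y) := by
    rw [hF_mul, map_add, map_mul, map_mul]
  obtain ⟨ε, hff⟩ : ∃ ε : ℤˣ, ∀ x y, π (F x) * π (F y) = ε • (π y * π x) := by
    rcases h with h | h
    · refine ⟨1, fun x y => ?_⟩
      rw [one_smul, ← sub_eq_zero, ← map_mul, ← map_mul, ← map_sub, ← P.mem_iff_mk'_eq_zero]
      exact h x y
    · refine ⟨-1, fun x y => ?_⟩
      rw [Units.neg_smul, one_smul, ← add_eq_zero_iff_eq_neg, ← map_mul, ← map_mul, ← map_add,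
        ← P.mem_iff_mk'_eq_zero]
      exact h x y
  have hQ := P.isPrimeRing_quotient hprime
  rcases GeneralizedDerivation.commute_or_eq_zero hQ P.ringCon.mk'_surjective hf_mul hff with
    hcomm | hd
  · have := P.nontrivial_quotient hP
    have := hQ.noZeroDivisors hcomm
    exact .inl ⟨fun a b => (hcomm a b).eq, NoZeroDivisors.to_isDomain _⟩
  · exact .inr fun x => P.mem_iff_mk'_eq_zero.mpr (hd x)

theorem stmt_11 {R : Type*} [Ring R] (P : TwoSidedIdeal R)
    (hP : P ≠ ⊤)
    (hprime : ∀ x y : R, (∀ r : R, x * r * y ∈ P) → x ∈ P ∨ y ∈ P)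
    (d F : R → R)
    (hd_add : ∀ x y : R, d (x + y) = d x + d y)
    (hd_mul : ∀ x y : R, d (x * y) = d x * y + x * d y)
    (hF_add : ∀ x y : R, F (x + y) = F x + F y)
    (hF_mul : ∀ x y : R, F (x * y) = F x * y + x * d y)
    (h : (∀ x y : R, F x * F y - y * x ∈ P) ∨ (∀ x y : R, F x * F y + y * x ∈ P)) :
    ((∀ a b : P.ringCon.Quotient, a * b = b * a) ∧ IsDomain P.ringCon.Quotient) ∨ (∀ x : R, d x ∈ P) :=
  stmt_11_general P hP hprime d F hF_mul h
end

section
/- Let R be a ring, P a prime two-sided ideal of R, and F a generalized derivation of R with associated derivation d. If F(xy) − [x,y] ∈ P for all x, y ∈ R, then the quotient ring R/P is a commutative integral domain. -/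
theorem stmt_12 {R : Type*} [Ring R] (P : TwoSidedIdeal R)
    (hP : P ≠ ⊤)
    (hprime : ∀ x y : R, (∀ r : R, x * r * y ∈ P) → x ∈ P ∨ y ∈ P)
    (d F : R → R)
    (hd_add : ∀ x y : R, d (x + y) = d x + d y)
    (hd_mul : ∀ x y : R, d (x * y) = d x * y + x * d y)
    (hF_add : ∀ x y : R, F (x + y) = F x + F y)
    (hF_mul : ∀ x y : R, F (x * y) = F x * y + x * d y)
    (h : ∀ x y : R, F (x * y) - (x * y - y * x) ∈ P) :
    (∀ a b : P.ringCon.Quotient, a * b = b * a) ∧ IsDomain P.ringCon.Quotient := by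
  have hone : (1 : R) ∉ P := fun h1 => hP (P.eq_top h1)
  -- key1 : x*y*d z - y*(x*z - z*x) ∈ P
  have key1 : ∀ x y z : R, x * y * d z - y * (x * z - z * x) ∈ P := by
    intro x y z
    have A := P.mul_mem_right _ z (h x y)
    have B := h x (y * z)
    have := P.sub_mem B A
    have eq1 : x * y * d z - y * (x * z - z * x)
        = (F (x * (y * z)) - (x * (y * z) - y * z * x)) - (F (x * y) - (x * y - y * x)) * z := by
      rw [show x * (y * z) = (x * y) * z from (mul_assoc x y z).symm, hF_mul]
      noncomm_ring
    rw [eq1]; exact this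
  -- key2 : [x,r]*y*d z ∈ P
  have key2 : ∀ x r y z : R, (x * r - r * x) * y * d z ∈ P := by
    intro x r y z
    have A := key1 x (r * y) z
    have B := P.mul_mem_left r _ (key1 x y z)
    have := P.sub_mem A B
    have eq1 : (x * r - r * x) * y * d z
        = (x * (r * y) * d z - r * y * (x * z - z * x))
          - r * (x * y * d z - y * (x * z - z * x)) := by noncomm_ring
    rw [eq1]; exact this
  -- commutators in P
  have comm : ∀ x z : R, x * z - z * x ∈ P := by
    intro x z
    by_cases hdz : d z ∈ P
    · have hy : ∀ r : R, 1 * r * (x * z - z * x) ∈ P := by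
        intro r
        have h1 : x * r * d z ∈ P := P.mul_mem_left (x*r) _ hdz
        have := P.sub_mem h1 (key1 x r z)
        have eq1 : 1 * r * (x * z - z * x) = x * r * d z - (x * r * d z - r * (x * z - z * x)) := by
          noncomm_ring
        rw [eq1]; exact this
      rcases hprime _ _ hy with h1 | h2
      · exact absurd h1 hone
      · exact h2
    · rcases hprime (x * z - z * x) (d z) (fun r => key2 x z r z) with h1 | h2
      · exact h1
      · exact absurd h2 hdz
  -- no zero divisors at ring level
  have nzd : ∀ a b : R, a * b ∈ P → a ∈ P ∨ b ∈ P := by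
    intro a b hab
    apply hprime
    intro r
    have h1 := P.mul_mem_right _ b (comm a r)
    have h2 := P.mul_mem_left r _ hab
    have := P.add_mem h1 h2
    have eq1 : a * r * b = (a * r - r * a) * b + r * (a * b) := by noncomm_ring
    rw [eq1]; exact this
  have memiff : ∀ x : R, (x : P.ringCon.Quotient) = 0 ↔ x ∈ P := by
    intro x
    rw [show (0 : P.ringCon.Quotient) = ((0 : R) : P.ringCon.Quotient) from rfl]
    rw [P.ringCon.eq, P.rel_iff, sub_zero]
  constructor
  · intro a b
    obtain ⟨x, rfl⟩ := Quotient.exists_rep a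
    obtain ⟨y, rfl⟩ := Quotient.exists_rep b
    show ((x * y : R) : P.ringCon.Quotient) = ((y * x : R) : P.ringCon.Quotient)
    rw [P.ringCon.eq, P.rel_iff]
    exact comm x y
  · have hnt : Nontrivial P.ringCon.Quotient := by
      refine ⟨0, 1, fun h01 => ?_⟩
      have : ((1 : R) : P.ringCon.Quotient) = 0 := by
        rw [show ((1:R) : P.ringCon.Quotient) = 1 from rfl, ← h01]
      exact hone ((memiff 1).1 this)
    have hnzd : NoZeroDivisors P.ringCon.Quotient := by
      refine ⟨fun {a b} hab => ?_⟩
      obtain ⟨x, rfl⟩ := Quotient.exists_rep a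
      obtain ⟨y, rfl⟩ := Quotient.exists_rep b
      have : ((x * y : R) : P.ringCon.Quotient) = 0 := hab
      rcases nzd x y ((memiff _).1 this) with hx | hy
      · exact Or.inl ((memiff x).2 hx)
      · exact Or.inr ((memiff y).2 hy)
    exact NoZeroDivisors.to_isDomain _
end

section
/- Let R be a ring, P a prime two-sided ideal of R, and F a generalized derivation of R with associated derivation d. If F(xy) − (x∘y) ∈ P for all x, y ∈ R, then the quotient ring R/P is a commutative integral domain. -/
theorem stmt_13 {R : Type*} [Ring R] (P : TwoSidedIdeal R)
    (hP : P ≠ ⊤)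
    (hprime : ∀ x y : R, (∀ r : R, x * r * y ∈ P) → x ∈ P ∨ y ∈ P)
    (d F : R → R)
    (hd_add : ∀ x y : R, d (x + y) = d x + d y)
    (hd_mul : ∀ x y : R, d (x * y) = d x * y + x * d y)
    (hF_add : ∀ x y : R, F (x + y) = F x + F y)
    (hF_mul : ∀ x y : R, F (x * y) = F x * y + x * d y)
    (h : ∀ x y : R, F (x * y) - (x * y + y * x) ∈ P) :
    (∀ a b : P.ringCon.Quotient, a * b = b * a) ∧ IsDomain P.ringCon.Quotient := by
  -- key1 : y*z*x - y*x*z - x*y*(d z) ∈ P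
  have key1 : ∀ x y z : R, y * z * x - y * x * z - x * y * d z ∈ P := by
    intro x y z
    have h1 := h x (y * z)
    have h2 := P.mul_mem_right _ z (h x y)
    have e : y * z * x - y * x * z - x * y * d z
        = (F (x * y) - (x * y + y * x)) * z
          - (F (x * (y * z)) - (x * (y * z) + y * z * x)) := by
      rw [(mul_assoc x y z).symm, hF_mul (x * y) z, hF_mul x y]
      noncomm_ring
    rw [e]
    exact P.sub_mem h2 h1
  have key2 : ∀ w x z : R, (∀ r : R, (w * x - x * w) * r * d z ∈ P) := by
    intro w x z r
    have h1 := key1 x (w * r) z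
    have h2 := P.mul_mem_left w _ (key1 x r z)
    have e : (w * x - x * w) * r * d z
        = (w * r * z * x - w * r * x * z - x * (w * r) * d z)
          - w * (r * z * x - r * x * z - x * r * d z) := by noncomm_ring
    rw [e]
    exact P.sub_mem h1 h2
  have comm : ∀ x y : R, x * y - y * x ∈ P := by
    by_cases hd : ∀ z : R, d z ∈ P
    · intro x y
      have hyc : ∀ r : R, (1 : R) * r * (x * y - y * x) ∈ P := by
        intro r
        have h1 := key1 y r x
        have h2 := P.mul_mem_left (y * r) _ (hd x)
        have e : (1 : R) * r * (x * y - y * x)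
            = (r * x * y - r * y * x - y * r * d x) + y * r * d x := by noncomm_ring
        rw [e]
        exact P.add_mem h1 h2
      rcases hprime 1 (x * y - y * x) hyc with h1 | h2
      · exact absurd (P.eq_top h1) hP
      · exact h2
    · push_neg at hd
      obtain ⟨z, hz⟩ := hd
      intro x y
      rcases hprime (x * y - y * x) (d z) (key2 x y z) with h1 | h2
      · exact h1
      · exact absurd h2 hz
  have hcomm : ∀ a b : P.ringCon.Quotient, a * b = b * a := by
    intro a b
    induction a using Quotient.ind with | _ x =>
    induction b using Quotient.ind with | _ y =>
    show (↑(x * y) : P.ringCon.Quotient) = ↑(y * x)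
    rw [RingCon.eq, P.rel_iff]
    exact comm x y
  refine ⟨hcomm, ?_⟩
  have hnt : Nontrivial P.ringCon.Quotient := by
    refine ⟨(1 : R), (0 : R), ?_⟩
    rw [Ne, RingCon.eq, P.rel_iff, sub_zero]
    intro h1
    exact hP (P.eq_top h1)
  have hnzd : NoZeroDivisors P.ringCon.Quotient := by
    constructor
    intro a b hab
    induction a using Quotient.ind with | _ x =>
    induction b using Quotient.ind with | _ y =>
    have hxy : x * y ∈ P := by
      have : (↑(x * y) : P.ringCon.Quotient) = ↑(0 : R) := hab
      rw [RingCon.eq, P.rel_iff, sub_zero] at this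
      exact this
    have hmid : ∀ r : R, x * r * y ∈ P := by
      intro r
      have h1 := P.mul_mem_right _ y (comm x r)
      have h2 := P.mul_mem_left r _ hxy
      have e : x * r * y = (x * r - r * x) * y + r * (x * y) := by noncomm_ring
      rw [e]
      exact P.add_mem h1 h2
    rcases hprime x y hmid with h1 | h2
    · left
      show (↑x : P.ringCon.Quotient) = ↑(0 : R)
      rw [RingCon.eq, P.rel_iff, sub_zero]; exact h1
    · right
      show (↑y : P.ringCon.Quotient) = ↑(0 : R)
      rw [RingCon.eq, P.rel_iff, sub_zero]; exact h2
  exact NoZeroDivisors.to_isDomain _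
end

section
/- Let R be a ring, P a prime two-sided ideal of R, and F a generalized derivation of R with associated derivation d. If F(x)F(y) − [x,y] ∈ P for all x, y ∈ R, then the quotient ring R/P is a commutative integral domain. -/
theorem stmt_14 {R : Type*} [Ring R] (P : TwoSidedIdeal R)
    (hP : P ≠ ⊤)
    (hprime : ∀ x y : R, (∀ r : R, x * r * y ∈ P) → x ∈ P ∨ y ∈ P)
    (d F : R → R)
    (hd_add : ∀ x y : R, d (x + y) = d x + d y)
    (hd_mul : ∀ x y : R, d (x * y) = d x * y + x * d y)
    (hF_add : ∀ x y : R, F (x + y) = F x + F y)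
    (hF_mul : ∀ x y : R, F (x * y) = F x * y + x * d y)
    (h : ∀ x y : R, F x * F y - (x * y - y * x) ∈ P) :
    (∀ a b : P.ringCon.Quotient, a * b = b * a) ∧ IsDomain P.ringCon.Quotient := by
  have hone : (1 : R) ∉ P := by
    intro h1
    apply hP
    apply TwoSidedIdeal.ext
    intro x
    simp only [TwoSidedIdeal.mem_top, iff_true]
    simpa using P.mul_mem_left x 1 h1
  -- Step 1 : F x * y * d z ≡ y * [x,z]
  have h1 : ∀ x y z : R, F x * y * d z - y * (x * z - z * x) ∈ P := by
    intro x y z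
    have hA : F x * F (y * z) - (x * (y * z) - (y * z) * x) ∈ P := h x (y * z)
    rw [hF_mul] at hA
    have hB : (F x * F y - (x * y - y * x)) * z ∈ P := P.mul_mem_right _ _ (h x y)
    have := P.sub_mem hA hB
    have heq : F x * (F y * z + y * d z) - (x * (y * z) - y * z * x) -
        (F x * F y - (x * y - y * x)) * z = F x * y * d z - y * (x * z - z * x) := by
      noncomm_ring
    rwa [heq] at this
  -- Step 2 : [F x, r] * y * d z ∈ P
  have h2 : ∀ x r z y : R, (F x * r - r * F x) * y * d z ∈ P := by
    intro x r z y
    have hA := h1 x (r * y) z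
    have hB : r * (F x * y * d z - y * (x * z - z * x)) ∈ P :=
      P.mul_mem_left _ _ (h1 x y z)
    have := P.sub_mem hA hB
    have heq : F x * (r * y) * d z - r * y * (x * z - z * x) -
        r * (F x * y * d z - y * (x * z - z * x)) = (F x * r - r * F x) * y * d z := by
      noncomm_ring
    rwa [heq] at this
  have hcomm : ∀ x y : R, x * y - y * x ∈ P := by
    by_cases hd : ∀ z : R, d z ∈ P
    · -- Case A: d(R) ⊆ P, so y * [x,z] ∈ P for all y
      intro x z
      have hy : ∀ y : R, y * (x * z - z * x) ∈ P := by
        intro y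
        have hm : F x * y * d z ∈ P := P.mul_mem_left _ _ (hd z)
        have := P.sub_mem hm (h1 x y z)
        simpa using this
      have := hprime 1 (x * z - z * x) (fun r => by simpa using hy r)
      exact this.resolve_left hone
    · -- Case B: F x is central mod P for every x
      push_neg at hd
      obtain ⟨z₀, hz₀⟩ := hd
      have hFc : ∀ x r : R, F x * r - r * F x ∈ P := fun x r =>
        (hprime _ _ (fun y => h2 x r z₀ y)).resolve_right hz₀
      -- all commutators are central mod P
      have hcc : ∀ x y r : R, (x * y - y * x) * r - r * (x * y - y * x) ∈ P := by
        intro x y r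
        -- [F x * F y, r] ∈ P
        have t1 : F x * (F y * r - r * F y) ∈ P := P.mul_mem_left _ _ (hFc y r)
        have t2 : (F x * r - r * F x) * F y ∈ P := P.mul_mem_right _ _ (hFc x r)
        have t3 : (F x * F y - (x * y - y * x)) * r ∈ P := P.mul_mem_right _ _ (h x y)
        have t4 : r * (F x * F y - (x * y - y * x)) ∈ P := P.mul_mem_left _ _ (h x y)
        have := P.sub_mem (P.add_mem (P.add_mem t1 t2) t4) t3
        have heq : F x * (F y * r - r * F y) + (F x * r - r * F x) * F y +
            r * (F x * F y - (x * y - y * x)) - (F x * F y - (x * y - y * x)) * r =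
            (x * y - y * x) * r - r * (x * y - y * x) := by noncomm_ring
        rwa [heq] at this
      intro x y
      set c := x * y - y * x with hc
      -- x * c = [x, x*y] is a commutator, hence central mod P
      have hxc : ∀ r : R, x * c * r - r * (x * c) ∈ P := by
        intro r
        have := hcc x (x * y) r
        have heq : (x * (x * y) - x * y * x) * r - r * (x * (x * y) - x * y * x) =
            x * c * r - r * (x * c) := by rw [hc]; noncomm_ring
        rwa [heq] at this
      -- c * c ∈ P
      have hc2 : c * c ∈ P := by
        have t1 := hxc y
        have t2 : x * (c * y - y * c) ∈ P := P.mul_mem_left _ _ (hcc x y y)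
        have := P.sub_mem t1 t2
        have heq : x * c * y - y * (x * c) - x * (c * y - y * c) = c * c := by
          rw [hc]; noncomm_ring
        rwa [heq] at this
      -- c * r * c ∈ P for all r
      have hcrc : ∀ r : R, c * r * c ∈ P := by
        intro r
        have t1 : c * (r * c - c * r) ∈ P := P.mul_mem_left _ _ (by
          have := P.neg_mem (hcc x y r)
          simpa [hc, neg_sub] using this)
        have t2 : c * c * r ∈ P := P.mul_mem_right _ _ hc2
        have := P.add_mem t1 t2
        have heq : c * (r * c - c * r) + c * c * r = c * r * c := by noncomm_ring
        rwa [heq] at this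
      exact (hprime c c hcrc).elim id id
  -- Now conclude about the quotient
  have hq : ∀ a b : P.ringCon.Quotient, a * b = b * a := by
    intro a b
    obtain ⟨x, rfl⟩ := Quot.exists_rep a
    obtain ⟨y, rfl⟩ := Quot.exists_rep b
    show ((x * y : R) : P.ringCon.Quotient) = ((y * x : R) : P.ringCon.Quotient)
    rw [RingCon.eq, P.rel_iff]
    exact hcomm x y
  refine ⟨hq, ?_⟩
  have hnt : Nontrivial P.ringCon.Quotient := by
    refine ⟨⟨((1 : R) : P.ringCon.Quotient), ((0 : R) : P.ringCon.Quotient), fun heq => hone ?_⟩⟩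
    rw [RingCon.eq, P.rel_iff] at heq
    simpa using heq
  have hnzd : NoZeroDivisors P.ringCon.Quotient := by
    constructor
    intro a b hab
    obtain ⟨x, rfl⟩ := Quot.exists_rep a
    obtain ⟨y, rfl⟩ := Quot.exists_rep b
    have hxy : x * y ∈ P := by
      have : ((x * y : R) : P.ringCon.Quotient) = ((0 : R) : P.ringCon.Quotient) := by
        simpa [RingCon.coe_mul, RingCon.coe_zero] using hab
      rw [RingCon.eq, P.rel_iff] at this
      simpa using this
    have hxry : ∀ r : R, x * r * y ∈ P := by
      intro r
      have h1 : (x * r * y) - (x * y * r) = x * (r * y - y * r) := by noncomm_ring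
      have h2 : x * (r * y - y * r) ∈ P := P.mul_mem_left _ _ (hcomm r y)
      have h3 : x * y * r ∈ P := P.mul_mem_right _ _ hxy
      have := P.add_mem (h1 ▸ h2) h3
      simpa using this
    rcases hprime x y hxry with hx | hy
    · left
      show ((x : R) : P.ringCon.Quotient) = ((0 : R) : P.ringCon.Quotient)
      rw [RingCon.eq, P.rel_iff]
      simpa using hx
    · right
      show ((y : R) : P.ringCon.Quotient) = ((0 : R) : P.ringCon.Quotient)
      rw [RingCon.eq, P.rel_iff]
      simpa using hy
  exact NoZeroDivisors.to_isDomain _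
end

section
/- Let R be a ring, P a prime two-sided ideal of R, and F a generalized derivation of R with associated derivation d. If F(x)F(y) − (x∘y) ∈ P for all x, y ∈ R, then the quotient ring R/P is a commutative integral domain. -/
theorem stmt_15 {R : Type*} [Ring R] (P : TwoSidedIdeal R)
    (hP : P ≠ ⊤)
    (hprime : ∀ x y : R, (∀ r : R, x * r * y ∈ P) → x ∈ P ∨ y ∈ P)
    (d F : R → R)
    (hd_add : ∀ x y : R, d (x + y) = d x + d y)
    (hd_mul : ∀ x y : R, d (x * y) = d x * y + x * d y)
    (hF_add : ∀ x y : R, F (x + y) = F x + F y)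
    (hF_mul : ∀ x y : R, F (x * y) = F x * y + x * d y)
    (h : ∀ x y : R, F x * F y - (x * y + y * x) ∈ P) :
    (∀ a b : P.ringCon.Quotient, a * b = b * a) ∧ IsDomain P.ringCon.Quotient := by
  -- 1 ∉ P
  have hone : (1 : R) ∉ P := by
    intro h1
    apply hP
    apply TwoSidedIdeal.ext
    intro x
    simp only [TwoSidedIdeal.mem_top, iff_true]
    simpa using P.mul_mem_left x 1 h1
  -- cancellation: if w * r ∈ P for all r... we use: if r * w ∈ P for all r then w ∈ P
  have cancel : ∀ w : R, (∀ r : R, r * w ∈ P) → w ∈ P := by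
    intro w hw
    rcases hprime 1 w (fun r => by simpa using hw r) with h1 | h2
    · exact absurd h1 hone
    · exact h2
  -- step1 : F x * (y * d z) - y * (z * x - x * z) ∈ P
  have step1 : ∀ x y z : R, F x * (y * d z) - y * (z * x - x * z) ∈ P := by
    intro x y z
    have A := h x (y * z)
    have B := P.mul_mem_right _ z (h x y)
    have key : F x * (y * d z) - y * (z * x - x * z)
        = (F x * F (y * z) - (x * (y * z) + y * z * x))
          - (F x * F y - (x * y + y * x)) * z := by
      rw [hF_mul]; noncomm_ring
    rw [key]
    exact P.sub_mem A B
  -- step2 : (F x * t - t * F x) * y * d z ∈ P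
  have step2 : ∀ x t y z : R, (F x * t - t * F x) * y * d z ∈ P := by
    intro x t y z
    have A := step1 x (t * y) z
    have B := P.mul_mem_left t _ (step1 x y z)
    have key : (F x * t - t * F x) * y * d z
        = (F x * (t * y * d z) - t * y * (z * x - x * z))
          - t * (F x * (y * d z) - y * (z * x - x * z)) := by
      noncomm_ring
    rw [key]
    exact P.sub_mem A B
  -- main commutativity
  have comm : ∀ x y : R, x * y - y * x ∈ P := by
    by_cases hA : ∀ z : R, d z ∈ P
    · -- case A : d(R) ⊆ P
      intro x z
      apply cancel
      intro r
      have A := step1 x r z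
      have hFd : F x * (r * d z) ∈ P := P.mul_mem_left _ _ (P.mul_mem_left _ _ (hA z))
      have : r * (z * x - x * z) ∈ P := by
        have := P.sub_mem hFd A
        simpa using this
      have key : r * (x * z - z * x) = -(r * (z * x - x * z)) := by noncomm_ring
      rw [key]
      exact P.neg_mem this
    · -- case B : F x is central mod P
      push_neg at hA
      obtain ⟨z₀, hz₀⟩ := hA
      have cenF : ∀ x t : R, F x * t - t * F x ∈ P := by
        intro x t
        rcases hprime (F x * t - t * F x) (d z₀) (fun r => step2 x t r z₀) with h1 | h2
        · exact h1
        · exact absurd h2 hz₀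
      -- cen w : w is central mod P
      set cen : R → Prop := fun w => ∀ t : R, w * t - t * w ∈ P with hcen
      have cen_sub : ∀ a b, cen a → cen b → cen (a - b) := by
        intro a b ha hb t
        have key : (a - b) * t - t * (a - b) = (a * t - t * a) - (b * t - t * b) := by
          noncomm_ring
        rw [key]; exact P.sub_mem (ha t) (hb t)
      have cen_mul : ∀ a b, cen a → cen b → cen (a * b) := by
        intro a b ha hb t
        have key : a * b * t - t * (a * b) = a * (b * t - t * b) + (a * t - t * a) * b := by
          noncomm_ring
        rw [key]
        exact P.add_mem (P.mul_mem_left _ _ (hb t)) (P.mul_mem_right _ _ (ha t))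
      have cen_congr : ∀ a b, a - b ∈ P → cen a → cen b := by
        intro a b hab ha t
        have key : b * t - t * b = (a * t - t * a) - ((a - b) * t - t * (a - b)) := by
          noncomm_ring
        rw [key]
        exact P.sub_mem (ha t)
          (P.sub_mem (P.mul_mem_right _ _ hab) (P.mul_mem_left _ _ hab))
      -- x ∘ y is central mod P
      have cen_anti : ∀ x y : R, cen (x * y + y * x) := fun x y =>
        cen_congr _ _ (h x y) (cen_mul _ _ (cenF x) (cenF y))
      -- 2xy central mod P
      have cen_two : ∀ x : R, cen (x + x) := by
        intro x
        have := cen_anti x 1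
        simpa using this
      -- commutators are central mod P
      have cen_comm : ∀ x y : R, cen (x * y - y * x) := by
        intro x y
        have h1 := cen_anti y x
        have h2 := cen_two (y * x)
        have key : x * y - y * x = (y * x + x * y) - (y * x + y * x) := by noncomm_ring
        rw [key]
        exact cen_sub _ _ h1 (by
          have : (y * x + y * x) = y * x + y * x := rfl
          exact h2)
      -- x * [x,y] central mod P
      have cen_xc : ∀ x y : R, cen (x * (x * y - y * x)) := by
        intro x y
        have h1 := cen_comm x (x * y)
        have key : x * (x * y) - x * y * x = x * (x * y - y * x) := by noncomm_ring
        rw [key] at h1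
        exact h1
      intro x y
      set c := x * y - y * x with hc
      apply hprime c c _ |>.elim id id
      intro r
      -- first : (x * y - y * x) * c ∈ P, i.e. c * c... we show [x,t] * c ∈ P with t := y
      have hxtc : ∀ t : R, (x * t - t * x) * c ∈ P := by
        intro t
        have h1 := cen_xc x y t
        have h2 : x * (c * t - t * c) ∈ P := P.mul_mem_left _ _ (cen_comm x y t)
        have key : (x * t - t * x) * c = (x * c * t - t * (x * c)) - x * (c * t - t * c) := by
          rw [hc]; noncomm_ring
        rw [key]
        exact P.sub_mem h1 h2
      have hcrc : c * (r * c - c * r) ∈ P := by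
        have h1 := cen_comm x y r
        have key : r * c - c * r = -(c * r - r * c) := by noncomm_ring
        rw [key]
        exact P.mul_mem_left _ _ (P.neg_mem h1)
      have key : c * r * c = c * (r * c - c * r) + (c * c) * r := by noncomm_ring
      rw [key]
      have hcc : c * c ∈ P := by
        have := hxtc y
        simpa [hc] using this
      exact P.add_mem hcrc (P.mul_mem_right _ _ hcc)
  -- now conclude about the quotient
  have qcomm : ∀ a b : P.ringCon.Quotient, a * b = b * a := by
    intro a b
    induction a using Quotient.inductionOn' with
    | h x =>
      induction b using Quotient.inductionOn' with
      | h y =>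
        show (x : P.ringCon.Quotient) * y = y * x
        rw [← RingCon.coe_mul, ← RingCon.coe_mul, RingCon.eq, P.rel_iff]
        exact comm x y
  refine ⟨qcomm, ?_⟩
  have hnt : Nontrivial P.ringCon.Quotient := by
    refine ⟨0, 1, fun h01 => ?_⟩
    have : ((0 : R) : P.ringCon.Quotient) = ((1 : R) : P.ringCon.Quotient) := by
      rw [RingCon.coe_zero, RingCon.coe_one]; exact h01
    rw [RingCon.eq, P.rel_iff] at this
    apply hone
    simpa using P.neg_mem this
  have hnzd : NoZeroDivisors P.ringCon.Quotient := by
    constructor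
    intro a b hab
    induction a using Quotient.inductionOn' with
    | h x =>
      induction b using Quotient.inductionOn' with
      | h y =>
        have hxy : x * y ∈ P := by
          have : ((x * y : R) : P.ringCon.Quotient) = ((0 : R) : P.ringCon.Quotient) := by
            rw [RingCon.coe_mul, RingCon.coe_zero]; exact hab
          rw [RingCon.eq, P.rel_iff] at this
          simpa using this
        have : x ∈ P ∨ y ∈ P := by
          apply hprime
          intro r
          have h1 : x * (r * y - y * r) ∈ P := P.mul_mem_left _ _ (by
            have := P.neg_mem (comm y r)
            simpa using this)
          have h2 : x * y * r ∈ P := P.mul_mem_right _ _ hxy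
          have key : x * r * y = x * (r * y - y * r) + x * y * r := by noncomm_ring
          rw [key]
          exact P.add_mem h1 h2
        rcases this with hx | hy
        · left
          show (x : P.ringCon.Quotient) = 0
          rw [← RingCon.coe_zero, RingCon.eq, P.rel_iff]
          simpa using hx
        · right
          show (y : P.ringCon.Quotient) = 0
          rw [← RingCon.coe_zero, RingCon.eq, P.rel_iff]
          simpa using hy
  exact NoZeroDivisors.to_isDomain _
end

section
/- Let R be a ring, P a prime two-sided ideal of R, and F a generalized derivation of R with associated derivation d. If F(xy) + [x,y] ∈ P for all x, y ∈ R, then the quotient ring R/P is a commutative integral domain. -/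
theorem stmt_16 {R : Type*} [Ring R] (P : TwoSidedIdeal R)
    (hP : P ≠ ⊤)
    (hprime : ∀ x y : R, (∀ r : R, x * r * y ∈ P) → x ∈ P ∨ y ∈ P)
    (d F : R → R)
    (hd_add : ∀ x y : R, d (x + y) = d x + d y)
    (hd_mul : ∀ x y : R, d (x * y) = d x * y + x * d y)
    (hF_add : ∀ x y : R, F (x + y) = F x + F y)
    (hF_mul : ∀ x y : R, F (x * y) = F x * y + x * d y)
    (h : ∀ x y : R, F (x * y) + (x * y - y * x) ∈ P) :
    (∀ a b : P.ringCon.Quotient, a * b = b * a) ∧ IsDomain P.ringCon.Quotient := by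
  -- F x ∈ P for all x (take y = 1)
  have hF : ∀ x : R, F x ∈ P := fun x => by
    have := h x 1
    simpa using this
  -- x * d y + (x*y - y*x) ∈ P
  have hkey : ∀ x y : R, x * d y + (x * y - y * x) ∈ P := fun x y => by
    have h1 := h x y
    rw [hF_mul] at h1
    have h2 : F x * y ∈ P := P.mul_mem_right _ _ (hF x)
    have := P.sub_mem h1 h2
    convert this using 1
    abel
  -- d y ∈ P
  have hd : ∀ y : R, d y ∈ P := fun y => by
    have := hkey 1 y
    simpa using this
  -- commutators in P
  have hcomm : ∀ x y : R, x * y - y * x ∈ P := fun x y => by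
    have h1 := hkey x y
    have h2 : x * d y ∈ P := P.mul_mem_left _ _ (hd y)
    have := P.sub_mem h1 h2
    simpa using this
  have hcommQ : ∀ a b : P.ringCon.Quotient, a * b = b * a := by
    intro a b
    induction a using Quotient.inductionOn with
    | h x =>
    induction b using Quotient.inductionOn with
    | h y =>
    change (Quotient.mk _ (x * y) : P.ringCon.Quotient) = Quotient.mk _ (y * x)
    exact Quotient.sound ((P.rel_iff _ _).2 (hcomm x y))
  refine ⟨hcommQ, ?_⟩
  have hone : (1 : R) ∉ P := fun hone => hP (P.eq_top hone)
  have : Nontrivial P.ringCon.Quotient := by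
    refine ⟨1, 0, fun heq => hone ?_⟩
    have := Quotient.exact heq
    have := (P.rel_iff (1 : R) 0).1 this
    simpa using this
  have : NoZeroDivisors P.ringCon.Quotient := by
    constructor
    intro a b hab
    induction a using Quotient.inductionOn with
    | h x =>
    induction b using Quotient.inductionOn with
    | h y =>
    have hxy : x * y ∈ P := by
      have : (Quotient.mk _ (x * y) : P.ringCon.Quotient) = Quotient.mk _ 0 := hab
      have := (P.rel_iff (x * y) 0).1 (Quotient.exact this)
      simpa using this
    have : ∀ r : R, x * r * y ∈ P := fun r => by
      have h1 : (x * r - r * x) * y ∈ P := P.mul_mem_right _ _ (hcomm x r)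
      have h2 : r * (x * y) ∈ P := P.mul_mem_left _ _ hxy
      have := P.add_mem h1 h2
      convert this using 1
      noncomm_ring
    rcases hprime x y this with hx | hy
    · left
      exact Quotient.sound ((P.rel_iff x 0).2 (by simpa using hx))
    · right
      exact Quotient.sound ((P.rel_iff y 0).2 (by simpa using hy))
  exact NoZeroDivisors.to_isDomain _
end

section
/- Let R be a ring, P a prime two-sided ideal of R, and F a generalized derivation of R with associated derivation d. If F(xy) + (x∘y) ∈ P for all x, y ∈ R, then the quotient ring R/P is a commutative integral domain. -/
theorem stmt_17 {R : Type*} [Ring R] (P : TwoSidedIdeal R)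
    (hP : P ≠ ⊤)
    (hprime : ∀ x y : R, (∀ r : R, x * r * y ∈ P) → x ∈ P ∨ y ∈ P)
    (d F : R → R)
    (hd_add : ∀ x y : R, d (x + y) = d x + d y)
    (hd_mul : ∀ x y : R, d (x * y) = d x * y + x * d y)
    (hF_add : ∀ x y : R, F (x + y) = F x + F y)
    (hF_mul : ∀ x y : R, F (x * y) = F x * y + x * d y)
    (h : ∀ x y : R, F (x * y) + (x * y + y * x) ∈ P) :
    (∀ a b : P.ringCon.Quotient, a * b = b * a) ∧ IsDomain P.ringCon.Quotient := by
  have one_not_mem : (1 : R) ∉ P := fun h1 => hP (P.one_mem_iff.mp h1)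
  -- star lemma
  have hstar : ∀ x y z : R, x * y * d z + (y * (z * x) - y * (x * z)) ∈ P := by
    intro x y z
    have hA : F (x * y) * z + x * y * d z + (x * y * z + y * z * x) ∈ P := by
      have := h x (y * z)
      rw [show x * (y * z) = (x * y) * z by noncomm_ring, hF_mul] at this
      exact this
    have hB : F (x * y) * z + x * y * z + y * x * z ∈ P := by
      have := P.mul_mem_right _ z (h x y)
      convert this using 1; noncomm_ring
    have := P.sub_mem hA hB
    convert this using 1; noncomm_ring
  -- commutator * y * d z ∈ P
  have hcd : ∀ x w y z : R, (x * w - w * x) * y * d z ∈ P := by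
    intro x w y z
    have h1 := hstar x (w * y) z
    have h2 := P.mul_mem_left w _ (hstar x y z)
    have := P.sub_mem h1 h2
    convert this using 1; noncomm_ring
  -- d z ∈ P for all z
  have hd : ∀ z : R, d z ∈ P := by
    intro z
    by_cases hdz : d z ∈ P
    · exact hdz
    have hcomm : ∀ x w : R, x * w - w * x ∈ P := by
      intro x w
      rcases hprime (x * w - w * x) (d z) (fun r => hcd x w r z) with hc | hc
      · exact hc
      · exact absurd hc hdz
    have hxy : ∀ x y : R, x * y * d z ∈ P := by
      intro x y
      have h1 := hstar x y z
      have h2 : y * (z * x) - y * (x * z) ∈ P := by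
        have := P.mul_mem_left y _ (hcomm z x)
        convert this using 1; noncomm_ring
      have := P.sub_mem h1 h2
      convert this using 1; noncomm_ring
    rcases hprime 1 (d z) (fun r => by simpa using hxy 1 r) with hc | hc
    · exact absurd hc one_not_mem
    · exact absurd hc hdz
  -- all commutators in P
  have hcomm : ∀ x z : R, z * x - x * z ∈ P := by
    intro x z
    have key : ∀ r : R, 1 * r * (z * x - x * z) ∈ P := by
      intro r
      have h1 := hstar x r z
      have h2 : x * r * d z ∈ P := P.mul_mem_left _ _ (hd z)
      have := P.sub_mem h1 h2
      convert this using 1; noncomm_ring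
    rcases hprime 1 (z * x - x * z) key with hc | hc
    · exact absurd hc one_not_mem
    · exact hc
  -- no zero divisors at the level of R
  have hdom : ∀ x y : R, x * y ∈ P → x ∈ P ∨ y ∈ P := by
    intro x y hxy
    apply hprime
    intro r
    have h1 : x * (r * y - y * r) ∈ P := P.mul_mem_left x _ (hcomm y r)
    have h2 : x * y * r ∈ P := P.mul_mem_right _ _ hxy
    have := P.add_mem h1 h2
    convert this using 1; noncomm_ring
  have memzero : ∀ x : R, (x : P.ringCon.Quotient) = 0 ↔ x ∈ P := by
    intro x
    rw [show (0 : P.ringCon.Quotient) = ((0 : R) : P.ringCon.Quotient) from rfl]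
    rw [RingCon.eq, P.rel_iff]
    simp
  constructor
  · intro a b
    induction a using Quotient.inductionOn with
    | h x =>
      induction b using Quotient.inductionOn with
      | h y =>
        show ((x : P.ringCon.Quotient) * y = y * x)
        rw [← RingCon.coe_mul, ← RingCon.coe_mul, RingCon.eq, P.rel_iff]
        exact hcomm y x
  · have hnt : Nontrivial P.ringCon.Quotient := by
      refine ⟨0, 1, fun h01 => ?_⟩
      have : (1 : R) ∈ P := by rw [← memzero]; exact h01.symm
      exact one_not_mem this
    have hnzd : NoZeroDivisors P.ringCon.Quotient := by
      constructor
      intro a b hab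
      induction a using Quotient.inductionOn with
      | h x =>
        induction b using Quotient.inductionOn with
        | h y =>
          have : ((x * y : R) : P.ringCon.Quotient) = 0 := by
            rw [RingCon.coe_mul]; exact hab
          rw [memzero] at this
          rcases hdom x y this with hc | hc
          · left; rw [show ((Quotient.mk _ x : P.ringCon.Quotient)) = (x : P.ringCon.Quotient) from rfl, memzero]; exact hc
          · right; rw [show ((Quotient.mk _ y : P.ringCon.Quotient)) = (y : P.ringCon.Quotient) from rfl, memzero]; exact hc
    exact NoZeroDivisors.to_isDomain _
end

section
/- Let R be a ring, P a prime two-sided ideal of R, and F a generalized derivation of R with associated derivation d. If F(x)F(y) + [x,y] ∈ P for all x, y ∈ R, then the quotient ring R/P is a commutative integral domain. -/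
theorem stmt_18 {R : Type*} [Ring R] (P : TwoSidedIdeal R)
    (hP : P ≠ ⊤)
    (hprime : ∀ x y : R, (∀ r : R, x * r * y ∈ P) → x ∈ P ∨ y ∈ P)
    (d F : R → R)
    (hd_add : ∀ x y : R, d (x + y) = d x + d y)
    (hd_mul : ∀ x y : R, d (x * y) = d x * y + x * d y)
    (hF_add : ∀ x y : R, F (x + y) = F x + F y)
    (hF_mul : ∀ x y : R, F (x * y) = F x * y + x * d y)
    (h : ∀ x y : R, F x * F y + (x * y - y * x) ∈ P) :
    (∀ a b : P.ringCon.Quotient, a * b = b * a) ∧ IsDomain P.ringCon.Quotient := by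
  -- Step 1
  have step1 : ∀ x y z : R, F x * y * d z + y * (x * z - z * x) ∈ P := by
    intro x y z
    have h1 := h x (y * z)
    rw [hF_mul] at h1
    have h2 := P.mul_mem_right _ z (h x y)
    have heq : F x * y * d z + y * (x * z - z * x)
        = (F x * (F y * z + y * d z) + (x * (y * z) - y * z * x))
          - ((F x * F y + (x * y - y * x)) * z) := by noncomm_ring
    rw [heq]
    exact P.sub_mem h1 h2
  have step2 : ∀ z : R, F z ∈ P ∨ d z ∈ P := by
    intro z
    refine hprime _ _ fun r => ?_
    have := step1 z r z
    simpa using this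
  have step3 : (∀ z : R, F z ∈ P) ∨ (∀ z : R, d z ∈ P) := by
    by_contra hc
    push_neg at hc
    obtain ⟨⟨a, ha⟩, ⟨b, hb⟩⟩ := hc
    have hda : d a ∈ P := (step2 a).resolve_left ha
    have hFb : F b ∈ P := (step2 b).resolve_right hb
    rcases step2 (a + b) with hF | hd
    · rw [hF_add] at hF
      exact ha (by simpa using P.sub_mem hF hFb)
    · rw [hd_add] at hd
      exact hb (by simpa using P.sub_mem hd hda)
  -- commutators lie in P
  have comm : ∀ x y : R, x * y - y * x ∈ P := by
    rcases step3 with hF | hd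
    · intro x y
      have hm : F x * F y ∈ P := P.mul_mem_right _ _ (hF x)
      simpa using P.sub_mem (h x y) hm
    · intro x y
      have h1 := step1 x 1 y
      have hm : F x * 1 * d y ∈ P := P.mul_mem_left _ _ (hd y)
      have := P.sub_mem h1 hm
      simpa using this
  have mem_iff0 : ∀ x : R, x ∈ P ↔ (x : P.ringCon.Quotient) = 0 := by
    intro x
    rw [TwoSidedIdeal.mem_iff]
    exact (RingCon.eq P.ringCon).symm
  have hcomm : ∀ a b : P.ringCon.Quotient, a * b = b * a := by
    intro a b
    induction a using Quotient.ind
    induction b using Quotient.ind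
    rename_i x y
    have : ((x * y - y * x : R) : P.ringCon.Quotient) = 0 := (mem_iff0 _).1 (comm x y)
    change (x : P.ringCon.Quotient) * y = (y : P.ringCon.Quotient) * x
    push_cast at this
    exact sub_eq_zero.mp this
  refine ⟨hcomm, ?_⟩
  have hnt : Nontrivial P.ringCon.Quotient := by
    refine ⟨1, 0, fun h10 => hP ?_⟩
    have h1 : (1 : R) ∈ P := (mem_iff0 1).2 (by simpa using h10)
    exact P.eq_top h1
  have hnzd : NoZeroDivisors P.ringCon.Quotient := by
    constructor
    intro a b hab
    induction a using Quotient.ind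
    induction b using Quotient.ind
    rename_i x y
    have hxy : x * y ∈ P := by
      rw [mem_iff0]
      push_cast
      exact hab
    have key : ∀ r : R, x * r * y ∈ P := by
      intro r
      have h1 : x * y * r ∈ P := P.mul_mem_right _ _ hxy
      have h2 : x * (r * y - y * r) ∈ P := P.mul_mem_left _ _ (comm r y)
      have heq : x * r * y = x * y * r + x * (r * y - y * r) := by noncomm_ring
      rw [heq]
      exact P.add_mem h1 h2
    rcases hprime x y key with hx | hy
    · left; exact (mem_iff0 x).1 hx
    · right; exact (mem_iff0 y).1 hy
  exact NoZeroDivisors.to_isDomain _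
end

section
/- Let R be a ring, P a prime two-sided ideal of R, and F a generalized derivation of R with associated derivation d. If F(x)F(y) + (x∘y) ∈ P for all x, y ∈ R, then the quotient ring R/P is a commutative integral domain. -/
theorem stmt_19 {R : Type*} [Ring R] (P : TwoSidedIdeal R)
    (hP : P ≠ ⊤)
    (hprime : ∀ x y : R, (∀ r : R, x * r * y ∈ P) → x ∈ P ∨ y ∈ P)
    (d F : R → R)
    (hd_add : ∀ x y : R, d (x + y) = d x + d y)
    (hd_mul : ∀ x y : R, d (x * y) = d x * y + x * d y)
    (hF_add : ∀ x y : R, F (x + y) = F x + F y)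
    (hF_mul : ∀ x y : R, F (x * y) = F x * y + x * d y)
    (h : ∀ x y : R, F x * F y + (x * y + y * x) ∈ P) :
    (∀ a b : P.ringCon.Quotient, a * b = b * a) ∧ IsDomain P.ringCon.Quotient := by
  have h1P : (1 : R) ∉ P := fun hm => hP (P.one_mem_iff.mp hm)
  -- Step 1: F x * (y * d x) ∈ P
  have hA : ∀ x y : R, F x * (y * d x) ∈ P := by
    intro x y
    have e1 := h x (y * x)
    have e2 := P.mul_mem_right _ x (h x y)
    have key : F x * (y * d x)
        = (F x * F (y * x) + (x * (y * x) + (y * x) * x))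
          - (F x * F y + (x * y + y * x)) * x := by
      rw [hF_mul]; noncomm_ring
    rw [key]; exact P.sub_mem e1 e2
  have hdich : ∀ x : R, F x ∈ P ∨ d x ∈ P := by
    intro x
    exact hprime _ _ (fun r => by rw [mul_assoc]; exact hA x r)
  -- Step 2: commutators lie in P
  have hcomm : ∀ x y : R, x * y - y * x ∈ P := by
    by_cases hd : ∀ z : R, d z ∈ P
    · -- case d ≡ 0 mod P
      intro x z
      have h2 : ∀ y : R, (1 : R) * y * (z * x - x * z) ∈ P := by
        intro y
        have e1 := h x (y * z)
        have e2 := P.mul_mem_right _ z (h x y)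
        have e3 : F x * (y * d z) + y * (z * x) - y * (x * z)
            = (F x * F (y * z) + (x * (y * z) + (y * z) * x))
              - (F x * F y + (x * y + y * x)) * z := by
          rw [hF_mul]; noncomm_ring
        have e4 : F x * (y * d z) + y * (z * x) - y * (x * z) ∈ P := by
          rw [e3]; exact P.sub_mem e1 e2
        have e5 : F x * (y * d z) ∈ P := P.mul_mem_left _ _ (P.mul_mem_left _ _ (hd z))
        have e6 : (1 : R) * y * (z * x - x * z)
            = (F x * (y * d z) + y * (z * x) - y * (x * z)) - F x * (y * d z) := by
          noncomm_ring
        rw [e6]; exact P.sub_mem e4 e5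
      rcases hprime 1 (z * x - x * z) h2 with h1 | hc
      · exact absurd h1 h1P
      · have : x * z - z * x = -(z * x - x * z) := by noncomm_ring
        rw [this]; exact P.neg_mem hc
    · -- case F ≡ 0 mod P
      push_neg at hd
      obtain ⟨z0, hz0⟩ := hd
      have hF0 : ∀ x : R, F x ∈ P := by
        intro x
        rcases hdich x with hx | hx
        · exact hx
        · have hdz : d (x + z0) ∉ P := by
            intro hm
            have : d z0 = d (x + z0) - d x := by rw [hd_add]; noncomm_ring
            exact hz0 (this ▸ P.sub_mem hm hx)
          have hFz0 : F z0 ∈ P := (hdich z0).resolve_right hz0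
          have hFxz : F (x + z0) ∈ P := (hdich (x + z0)).resolve_right hdz
          have : F x = F (x + z0) - F z0 := by rw [hF_add]; noncomm_ring
          rw [this]; exact P.sub_mem hFxz hFz0
      have hanti : ∀ x y : R, x * y + y * x ∈ P := by
        intro x y
        have : x * y + y * x = (F x * F y + (x * y + y * x)) - F x * F y := by noncomm_ring
        rw [this]; exact P.sub_mem (h x y) (P.mul_mem_right _ _ (hF0 x))
      have h2m : ((1 : R) * 1 + 1 * 1) ∈ P := hanti 1 1
      intro x y
      have : x * y - y * x = (x * y + y * x) - (1 * 1 + 1 * 1) * (y * x) := by noncomm_ring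
      rw [this]; exact P.sub_mem (hanti x y) (P.mul_mem_right _ _ h2m)
  -- Step 3: conclusions about the quotient
  have hcommQ : ∀ a b : P.ringCon.Quotient, a * b = b * a := by
    intro a b
    induction a using Quotient.inductionOn with | h x => ?_
    induction b using Quotient.inductionOn with | h y => ?_
    show ((x * y : R) : P.ringCon.Quotient) = ((y * x : R) : P.ringCon.Quotient)
    rw [RingCon.eq, P.rel_iff]
    exact hcomm x y
  have hnt : Nontrivial P.ringCon.Quotient := by
    refine ⟨(1 : R), (0 : R), ?_⟩
    intro he
    rw [RingCon.eq, P.rel_iff] at he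
    simpa using (h1P (by simpa using he))
  have hnzd : NoZeroDivisors P.ringCon.Quotient := by
    constructor
    intro a b hab
    induction a using Quotient.inductionOn with | h x => ?_
    induction b using Quotient.inductionOn with | h y => ?_
    have hxy : x * y ∈ P := by
      have : ((x * y : R) : P.ringCon.Quotient) = ((0 : R) : P.ringCon.Quotient) := by
        exact_mod_cast hab
      rw [RingCon.eq, P.rel_iff] at this
      simpa using this
    have hall : ∀ r : R, x * r * y ∈ P := by
      intro r
      have : x * r * y = (x * r - r * x) * y + r * (x * y) := by noncomm_ring
      rw [this]
      exact P.add_mem (P.mul_mem_right _ _ (hcomm x r)) (P.mul_mem_left _ _ hxy)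
    rcases hprime x y hall with hx | hy
    · left
      show ((x : R) : P.ringCon.Quotient) = ((0 : R) : P.ringCon.Quotient)
      rw [RingCon.eq, P.rel_iff]; simpa using hx
    · right
      show ((y : R) : P.ringCon.Quotient) = ((0 : R) : P.ringCon.Quotient)
      rw [RingCon.eq, P.rel_iff]; simpa using hy
  exact ⟨hcommQ, NoZeroDivisors.to_isDomain _⟩
end
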